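/- arXiv:2312.13644 — 8 statements merged into one kernel-verified Lean document; each statement's English description precedes it below -/
import Mathlib

section
/- Let D be a DAG with n vertices and let comb(D) be obtained from D by fixing a topological ordering v₁ < ⋯ < vₙ, adding new vertices u₁,…,uₙ, arcs vᵢ → uᵢ for each i, and arcs uᵢ → u_{i+1} for each i < n. Then for every i, the set of ancestors of uᵢ in comb(D) is exactly {u₁,…,uᵢ, v₁,…,vᵢ}, so uᵢ has exactly 2i ancestors; moreover the ancestor set of each vᵢ in comb(D) equals its ancestor set in D. -/
/-- The comb construction: given a DAG on `Fin n` given in a topological ordering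
(`E i j → i < j`), `comb` has vertices `Fin n ⊕ Fin n` where `inl i` is `vᵢ` and
`inr i` is `uᵢ`; the arcs are those of `D`, arcs `vᵢ → uᵢ` and arcs `uᵢ → uᵢ₊₁`. -/
def combE {n : ℕ} (E : Fin n → Fin n → Prop) : (Fin n ⊕ Fin n) → (Fin n ⊕ Fin n) → Prop
  | .inl i, .inl j => E i j
  | .inl i, .inr j => i = j
  | .inr i, .inr j => (i : ℕ) + 1 = (j : ℕ)
  | .inr _, .inl _ => False

lemma comb_reach_inl {n : ℕ} (E : Fin n → Fin n → Prop) {w : Fin n ⊕ Fin n} {i : Fin n}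
    (h : Relation.ReflTransGen (combE E) w (Sum.inl i)) :
    ∃ j, w = Sum.inl j ∧ Relation.ReflTransGen E j i := by
  induction h using Relation.ReflTransGen.head_induction_on with
  | refl => exact ⟨i, rfl, .refl⟩
  | head hwx _ ih =>
    obtain ⟨j, rfl, hj⟩ := ih
    rename_i w' _
    cases w' with
    | inl k => exact ⟨k, rfl, .head hwx hj⟩
    | inr k => exact absurd hwx (by simp [combE])

lemma comb_reach_step {n : ℕ} (E : Fin n → Fin n → Prop) :
    ∀ m : ℕ, ∀ i j : Fin n, (i : ℕ) = (j : ℕ) + m →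
      Relation.ReflTransGen (combE E) (Sum.inr j) (Sum.inr i) := by
  intro m
  induction m with
  | zero => intro i j h; have : i = j := Fin.ext (by omega); subst this; exact .refl
  | succ m ih =>
    intro i j h
    have hlt : (j : ℕ) + 1 < n := by omega
    refine .head (b := Sum.inr ⟨(j : ℕ) + 1, hlt⟩) (by simp [combE]) (ih i _ ?_)
    simp; omega

/-- In `comb(D)`: the ancestors of `uᵢ` are exactly `{u₁,…,uᵢ,v₁,…,vᵢ}`, hence `uᵢ` has
exactly `2i` ancestors (here `2 * (i+1)` since `Fin n` is 0-indexed), and the ancestor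
set of each `vᵢ` is unchanged. -/
theorem comb_ancestors {n : ℕ} (E : Fin n → Fin n → Prop)
    (htopo : ∀ i j : Fin n, E i j → i < j) :
    (∀ i : Fin n,
      {w : Fin n ⊕ Fin n | Relation.ReflTransGen (combE E) w (Sum.inr i)} =
        (Sum.inl '' {j : Fin n | j ≤ i}) ∪ (Sum.inr '' {j : Fin n | j ≤ i})) ∧
    (∀ i : Fin n,
      {w : Fin n ⊕ Fin n | Relation.ReflTransGen (combE E) w (Sum.inr i)}.ncard =
        2 * ((i : ℕ) + 1)) ∧
    (∀ i : Fin n,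
      {w : Fin n ⊕ Fin n | Relation.ReflTransGen (combE E) w (Sum.inl i)} =
        Sum.inl '' {j : Fin n | Relation.ReflTransGen E j i}) := by
  have key : ∀ i : Fin n,
      {w : Fin n ⊕ Fin n | Relation.ReflTransGen (combE E) w (Sum.inr i)} =
        (Sum.inl '' {j : Fin n | j ≤ i}) ∪ (Sum.inr '' {j : Fin n | j ≤ i}) := by
    intro i
    ext w
    simp only [Set.mem_setOf_eq, Set.mem_union, Set.mem_image]
    constructor
    · intro h
      induction h using Relation.ReflTransGen.head_induction_on with
      | refl => exact Or.inr ⟨i, le_refl i, rfl⟩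
      | head hwx _ ih =>
        rename_i w' x' _
        rcases ih with ⟨j, hj, rfl⟩ | ⟨j, hj, rfl⟩
        · cases w' with
          | inl k =>
            exact Or.inl ⟨k, le_trans (le_of_lt (htopo k j hwx)) hj, rfl⟩
          | inr k => exact absurd hwx (by simp [combE])
        · cases w' with
          | inl k =>
            have : k = j := hwx
            exact Or.inl ⟨k, this ▸ hj, rfl⟩
          | inr k =>
            have : (k : ℕ) + 1 = (j : ℕ) := hwx
            exact Or.inr ⟨k, le_trans (by omega : k ≤ j) hj, rfl⟩
    · rintro (⟨j, hj, rfl⟩ | ⟨j, hj, rfl⟩)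
      · exact .head (b := Sum.inr j) rfl
          (comb_reach_step E ((i : ℕ) - (j : ℕ)) i j (by omega))
      · exact comb_reach_step E ((i : ℕ) - (j : ℕ)) i j (by omega)
  refine ⟨key, ?_, ?_⟩
  · intro i
    rw [key i]
    have hS : {j : Fin n | j ≤ i} = ↑(Finset.Iic i) := by ext; simp
    have hcard : ({j : Fin n | j ≤ i}).ncard = (i : ℕ) + 1 := by
      rw [hS, Set.ncard_coe_finset, Fin.card_Iic]
    have hfin : ({j : Fin n | j ≤ i}).Finite := Set.toFinite _
    rw [Set.ncard_union_eq]
    · rw [Set.ncard_image_of_injective _ Sum.inl_injective,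
        Set.ncard_image_of_injective _ Sum.inr_injective, hcard]
      ring
    · rw [Set.disjoint_iff]
      rintro w ⟨⟨a, _, rfl⟩, ⟨b, _, hb⟩⟩
      exact absurd hb (by simp)

  · intro i
    ext w
    simp only [Set.mem_setOf_eq, Set.mem_image]
    constructor
    · intro h
      obtain ⟨j, rfl, hj⟩ := comb_reach_inl E h
      exact ⟨j, hj, rfl⟩
    · rintro ⟨j, hj, rfl⟩
      induction hj using Relation.ReflTransGen.head_induction_on with
      | refl => exact .refl
      | head h _ ih =>
        exact Relation.ReflTransGen.head (show combE E (Sum.inl _) (Sum.inl _) from h) ih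
end

section
/- Let D be a DAG with n vertices and comb(D) the DAG obtained by the comb construction (adding a directed path u₁ → ⋯ → uₙ and arcs vᵢ → uᵢ for a topological ordering v₁,…,vₙ of D). Then there is a strategy solving the Regression Search Problem on comb(D) (with 2n candidate faulty vertices) using at most ⌈log₂(2n)⌉ queries in the worst case, and this is optimal. -/
/-!
A strategy of height `h` has at most `2 ^ h` leaves, and a correct strategy must have every
vertex as a leaf, so at least `⌈log₂ (2n)⌉` queries are needed.

Conversely, for a topological ordering the ancestors of `uₘ` in `comb(D)` are exactly the
`vᵢ` and `uᵢ` with `i ≤ m`, so the queries `uₘ` are threshold queries on the level `i`.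
Binary search over the `n` levels with them takes `⌈log₂ n⌉` queries and isolates a pair
`{vᵢ, uᵢ}`; one query of `vᵢ` then separates the pair, because no `uⱼ` is an ancestor of a `vᵢ`.
This strategy does not depend on `D`.
-/

/-- A strategy is a binary decision tree: internal nodes are queried vertices,
leaves identify the faulty vertex. -/
inductive Strategy (V : Type) : Type where
  | leaf : V → Strategy V
  | node : V → Strategy V → Strategy V → Strategy V

namespace Strategy

/-- The worst-case number of queries of a strategy is the height of the tree. -/
def height {V : Type} : Strategy V → ℕ
  | leaf _ => 0
  | node _ l r => 1 + max l.height r.height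

open Classical in
/-- Running a strategy: `anc u v` means `u` is an ancestor of `v` (including `u = v`).
A query of `q` answers "bugged" (left subtree) iff the faulty vertex `f` is an ancestor
of `q`, and "clean" (right subtree) otherwise. The result is the vertex identified at
the reached leaf. -/
noncomputable def run {V : Type} (anc : V → V → Prop) : Strategy V → V → V
  | leaf v, _ => v
  | node q l r, f => if anc f q then run anc l f else run anc r f

end Strategy


namespace Strategy

variable {V : Type}

def leaves : Strategy V → List V
  | leaf v => [v]
  | node _ l r => l.leaves ++ r.leaves

theorem length_leaves_le (s : Strategy V) : s.leaves.length ≤ 2 ^ s.height := by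
  induction s with
  | leaf v => simp [leaves, height]
  | node q l r ihl ihr =>
    have hl : 2 ^ l.height ≤ 2 ^ max l.height r.height := Nat.pow_le_pow_right two_pos (by omega)
    have hr : 2 ^ r.height ≤ 2 ^ max l.height r.height := Nat.pow_le_pow_right two_pos (by omega)
    simp only [leaves, height, List.length_append, pow_add]
    omega

theorem run_mem_leaves (anc : V → V → Prop) (s : Strategy V) (f : V) :
    s.run anc f ∈ s.leaves := by
  induction s with
  | leaf v => simp [run, leaves]
  | node q l r ihl ihr =>
    simp only [run, leaves, List.mem_append]
    split
    · exact Or.inl ihl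
    · exact Or.inr ihr

theorem card_le_two_pow_height [Fintype V] {anc : V → V → Prop} {s : Strategy V}
    (hs : ∀ f, s.run anc f = f) : Fintype.card V ≤ 2 ^ s.height := by
  have hsurj : Function.Surjective s.leaves.get := fun f =>
    List.mem_iff_get.1 (hs f ▸ s.run_mem_leaves anc f)
  calc Fintype.card V ≤ Fintype.card (Fin s.leaves.length) := Fintype.card_le_of_surjective _ hsurj
    _ = s.leaves.length := Fintype.card_fin _
    _ ≤ 2 ^ s.height := s.length_leaves_le

theorem clog_card_le_height [Fintype V] {anc : V → V → Prop} {s : Strategy V}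
    (hs : ∀ f, s.run anc f = f) : Nat.clog 2 (Fintype.card V) ≤ s.height :=
  (Nat.clog_le_iff_le_pow one_lt_two).2 (card_le_two_pow_height hs)

def bisect (cut : ℕ → V) (base : ℕ → Strategy V) (lo s : ℕ) : Strategy V :=
  if s ≤ 1 then base lo
  else node (cut (lo + (s + 1) / 2 - 1)) (bisect cut base lo ((s + 1) / 2))
    (bisect cut base (lo + (s + 1) / 2) (s - (s + 1) / 2))
termination_by s

theorem height_bisect_le {cut : ℕ → V} {base : ℕ → Strategy V} {h : ℕ}
    (hbase : ∀ m, (base m).height ≤ h) (k : ℕ) :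
    ∀ {lo s}, s ≤ 2 ^ k → (bisect cut base lo s).height ≤ k + h := by
  induction k with
  | zero =>
    intro lo s hs
    rw [bisect, if_pos (by simpa using hs)]
    simpa using hbase lo
  | succ k ih =>
    intro lo s hs
    rw [bisect]
    split_ifs
    · exact (hbase lo).trans (by omega)
    · have hl := ih (lo := lo) (s := (s + 1) / 2) (by rw [pow_succ] at hs; omega)
      have hr := ih (lo := lo + (s + 1) / 2) (s := s - (s + 1) / 2) (by rw [pow_succ] at hs; omega)
      simp only [height]
      omega

theorem run_bisect {anc : V → V → Prop} {ℓ : V → ℕ} {cut : ℕ → V} {base : ℕ → Strategy V}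
    {N : ℕ} (hcut : ∀ f, ∀ m < N, (anc f (cut m) ↔ ℓ f ≤ m))
    (hbase : ∀ f, (base (ℓ f)).run anc f = f) (s : ℕ) :
    ∀ {lo f}, lo + s ≤ N → lo ≤ ℓ f → ℓ f < lo + s → (bisect cut base lo s).run anc f = f := by
  induction s using Nat.strong_induction_on with
  | _ s ih =>
  intro lo f hN hlo hhi
  rw [bisect]
  split_ifs with hs
  · obtain rfl : ℓ f = lo := by omega
    exact hbase f
  · simp only [run, hcut f (lo + (s + 1) / 2 - 1) (by omega)]
    split_ifs
    · exact ih _ (by omega) (by omega) hlo (by omega)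
    · exact ih _ (by omega) (by omega) (by omega) (by omega)

end Strategy

theorem Nat.clog_mul_base {b n : ℕ} (hb : 1 < b) (hn : 1 ≤ n) :
    Nat.clog b (b * n) = Nat.clog b n + 1 := by
  have hdiv : (b * n + b - 1) / b = n := by
    rw [Nat.add_sub_assoc hb.le, Nat.mul_add_div (by omega), Nat.div_eq_of_lt (by omega)]
    rfl
  rw [Nat.clog_of_two_le hb (by nlinarith), hdiv]

namespace Comb

variable {n : ℕ} {E : Fin n → Fin n → Prop}

def level : Fin n ⊕ Fin n → ℕ := Sum.elim Fin.val Fin.val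

theorem level_le_of_reflTransGen (htopo : ∀ i j : Fin n, E i j → i < j) {u v : Fin n ⊕ Fin n}
    (h : Relation.ReflTransGen (combE E) u v) : level u ≤ level v := by
  induction h with
  | refl => rfl
  | @tail v w _ hvw ih =>
    refine ih.trans ?_
    rcases v with i | i <;> rcases w with j | j <;> simp only [combE] at hvw <;>
      simp only [level, Sum.elim_inl, Sum.elim_inr]
    · exact (htopo _ _ hvw).le
    · exact hvw ▸ le_rfl
    · omega

theorem reflTransGen_inr_of_le {i j : Fin n} (hij : i ≤ j) :
    Relation.ReflTransGen (combE E) (.inr i) (.inr j) := by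
  obtain ⟨j, hj⟩ := j
  induction j with
  | zero =>
    obtain rfl : i = ⟨0, hj⟩ := Fin.ext (Nat.le_zero.1 hij)
    rfl
  | succ k ih =>
    rcases hij.eq_or_lt with rfl | hlt
    · rfl
    · exact (ih (by omega) (Nat.le_of_lt_succ hlt)).tail rfl

theorem not_reflTransGen_inr_inl (i j : Fin n) :
    ¬ Relation.ReflTransGen (combE E) (.inr i) (.inl j) := by
  suffices ∀ w, Relation.ReflTransGen (combE E) (.inr i) w → w.isRight from
    fun h => by simpa using this _ h
  intro w h
  induction h with
  | refl => rfl
  | @tail v w _ hvw ih =>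
    cases v <;> cases w <;> simp_all [combE]

theorem reflTransGen_inr_iff (htopo : ∀ i j : Fin n, E i j → i < j) (f : Fin n ⊕ Fin n)
    (m : Fin n) : Relation.ReflTransGen (combE E) f (.inr m) ↔ level f ≤ m := by
  refine ⟨level_le_of_reflTransGen htopo, fun h => ?_⟩
  cases f with
  | inl i => exact .head (show combE E (.inl i) (.inr i) from rfl) (reflTransGen_inr_of_le h)
  | inr i => exact reflTransGen_inr_of_le h

def strategy (n : ℕ) [NeZero n] : Strategy (Fin n ⊕ Fin n) :=
  Strategy.bisect (fun m => .inr (Fin.ofNat n m))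
    (fun m => .node (.inl (Fin.ofNat n m)) (.leaf (.inl (Fin.ofNat n m)))
      (.leaf (.inr (Fin.ofNat n m))))
    0 n

theorem height_strategy_le [NeZero n] : (strategy n).height ≤ Nat.clog 2 (2 * n) := by
  rw [Nat.clog_mul_base one_lt_two (NeZero.one_le)]
  exact Strategy.height_bisect_le (fun _ => le_refl 1) _ (Nat.le_pow_clog one_lt_two n)

theorem run_strategy [NeZero n] (htopo : ∀ i j : Fin n, E i j → i < j) (f : Fin n ⊕ Fin n) :
    (strategy n).run (Relation.ReflTransGen (combE E)) f = f := by
  refine Strategy.run_bisect (ℓ := level) (N := n) (fun f m hm => ?_) (fun f => ?_) n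
    (Nat.zero_add n).le (Nat.zero_le _) (by cases f <;> simp [level])
  · rw [reflTransGen_inr_iff htopo, Fin.val_ofNat, Nat.mod_eq_of_lt hm]
  · cases f with
    | inl i =>
      simp only [Strategy.run, level, Sum.elim_inl, Fin.ofNat_val_eq_self]
      exact if_pos (by rw [Fin.ofNat_val_eq_self])
    | inr i => simp [Strategy.run, level, not_reflTransGen_inr_inl]

end Comb

/-- On `comb(D)` (with `2n` candidate faulty vertices) there is a correct strategy using
at most `⌈log₂(2n)⌉` queries in the worst case, and this is optimal. -/
theorem comb_optimal_strategy (n : ℕ) (hn : 1 ≤ n) (E : Fin n → Fin n → Prop)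
    (htopo : ∀ i j : Fin n, E i j → i < j) :
    (∃ s : Strategy (Fin n ⊕ Fin n),
      (∀ f, s.run (fun u v => Relation.ReflTransGen (combE E) u v) f = f) ∧
      s.height ≤ Nat.clog 2 (2 * n)) ∧
    (∀ s : Strategy (Fin n ⊕ Fin n),
      (∀ f, s.run (fun u v => Relation.ReflTransGen (combE E) u v) f = f) →
      Nat.clog 2 (2 * n) ≤ s.height) := by
  have : NeZero n := NeZero.of_pos hn
  refine ⟨⟨Comb.strategy n, Comb.run_strategy htopo, Comb.height_strategy_le⟩, fun s hs => ?_⟩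
  simpa [Fintype.card_sum, two_mul] using Strategy.clog_card_le_height hs
end

section
/- For every integer k > 2 there exists a DAG with a single sink such that the optimal worst-case number of queries for the Regression Search Problem is k, while the git bisect greedy algorithm (always querying a vertex of maximum score) uses 2^{k−1} − 1 queries in the worst case. In particular, the pathological DAG can be taken as comb(O) where O is the octopus on 2^{k−1} − 1 vertices. -/
/-- The score of `x` within the candidate set `C`: the minimum of the number of
candidates that are ancestors of `x` and the number that are not. -/
noncomputable def scoreIn {V : Type} (anc : V → V → Prop) (C : Set V) (x : V) : ℕ :=
  min ((C ∩ {u | anc u x}).ncard) ((C \ {u | anc u x}).ncard)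

/-- `IsGB anc C s`: the strategy `s` is a possible run of the git bisect algorithm on
the candidate set `C`.  At each step a candidate of maximum score is queried, and the
candidate set is restricted to the ancestors (bugged answer) or non-ancestors (clean
answer) of the queried vertex; the algorithm stops when a single candidate remains. -/
inductive IsGB {V : Type} (anc : V → V → Prop) : Set V → Strategy V → Prop where
  | leaf (v : V) : IsGB anc {v} (Strategy.leaf v)
  | node (C : Set V) (q : V) (l r : Strategy V)
      (hq : q ∈ C)
      (hmax : ∀ x ∈ C, scoreIn anc C x ≤ scoreIn anc C q)
      (hl : IsGB anc (C ∩ {u | anc u q}) l)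
      (hr : IsGB anc (C \ {u | anc u q}) r) :
      IsGB anc C (Strategy.node q l r)

/-- The octopus on `m` vertices in topological order: every vertex other than the last
one (the sink) has a single arc to the sink. -/
def octE (m : ℕ) : Fin m → Fin m → Prop :=
  fun i j => (j : ℕ) = m - 1 ∧ (i : ℕ) ≠ m - 1

def ancP (m : ℕ) : (Fin m ⊕ Fin m) → (Fin m ⊕ Fin m) → Prop
  | .inl i, .inl j => i = j ∨ (j : ℕ) = m - 1
  | .inl i, .inr j => (i : ℕ) ≤ (j : ℕ)
  | .inr i, .inr j => (i : ℕ) ≤ (j : ℕ)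
  | .inr _, .inl _ => False

lemma inr_chain {m : ℕ} (i j : Fin m) (h : (i:ℕ) ≤ (j:ℕ)) :
    Relation.ReflTransGen (combE (octE m)) (.inr i) (.inr j) := by
  obtain ⟨d, hd⟩ := Nat.le.dest h
  induction d generalizing j with
  | zero => have : i = j := Fin.ext (by omega); subst this; exact .refl
  | succ d ih =>
    have hj' : (i:ℕ) + d < m := by omega
    have : Relation.ReflTransGen (combE (octE m)) (.inr i) (.inr ⟨(i:ℕ)+d, hj'⟩) :=
      ih ⟨(i:ℕ)+d, hj'⟩ (by simp) (by simp)
    exact this.tail (by show (i:ℕ) + d + 1 = (j:ℕ); omega)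

lemma anc_iff {m : ℕ} (u v : Fin m ⊕ Fin m) :
    Relation.ReflTransGen (combE (octE m)) u v ↔ ancP m u v := by
  constructor
  · intro h
    induction h with
    | refl => cases u with
      | inl i => exact Or.inl rfl
      | inr i => exact le_refl _
    | tail h₁ h₂ ih =>
      rename_i y z
      cases y with
      | inl a =>
        cases z with
        | inl b =>
          obtain ⟨hb, ha⟩ := h₂
          cases u with
          | inl i => exact Or.inr hb
          | inr i => exact ih
        | inr b =>
          have hab : a = b := h₂
          cases u with
          | inl i =>
            have hab' : (a:ℕ) = (b:ℕ) := by rw [hab]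
            have hi := i.isLt
            rcases ih with h | h
            · have : (i:ℕ) = (a:ℕ) := by rw [h]
              show (i:ℕ) ≤ (b:ℕ); omega
            · show (i:ℕ) ≤ (b:ℕ); omega
          | inr i => exact (ih : False).elim
      | inr a =>
        cases z with
        | inl b => exact absurd h₂ (by simp [combE])
        | inr b =>
          have hab : (a:ℕ) + 1 = (b:ℕ) := h₂
          cases u with
          | inl i =>
            have ih' : (i:ℕ) ≤ (a:ℕ) := ih
            show (i:ℕ) ≤ (b:ℕ); omega
          | inr i =>
            have ih' : (i:ℕ) ≤ (a:ℕ) := ih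
            show (i:ℕ) ≤ (b:ℕ); omega
  · intro h
    cases u with
    | inl i =>
      cases v with
      | inl j =>
        rcases h with h | h
        · subst h; exact .refl
        · by_cases hij : i = j
          · subst hij; exact .refl
          · exact Relation.ReflTransGen.single ⟨h, fun hc => hij (Fin.ext (by omega))⟩
      | inr j =>
        have h1 : Relation.ReflTransGen (combE (octE m)) (.inl i) (.inr i) :=
          Relation.ReflTransGen.single rfl
        exact h1.trans (inr_chain i j h)
    | inr i =>
      cases v with
      | inl j => exact absurd h (by simp [ancP])
      | inr j => exact inr_chain i j h

/-! generic lemmas -/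

lemma run_range_card {V : Type} [Finite V] (anc : V → V → Prop) (s : Strategy V) :
    (Set.range (s.run anc)).ncard ≤ 2 ^ s.height := by
  induction s with
  | leaf v =>
    have : Set.range ((Strategy.leaf v).run anc) ⊆ {v} := by
      rintro x ⟨f, rfl⟩; rfl
    calc (Set.range ((Strategy.leaf v).run anc)).ncard ≤ ({v} : Set V).ncard :=
          Set.ncard_le_ncard this (Set.toFinite _)
      _ = 1 := Set.ncard_singleton v
      _ ≤ 2 ^ (Strategy.leaf v).height := Nat.one_le_two_pow
  | node q l r ihl ihr =>
    have hsub : Set.range ((Strategy.node q l r).run anc) ⊆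
        Set.range (l.run anc) ∪ Set.range (r.run anc) := by
      rintro x ⟨f, rfl⟩
      by_cases h : anc f q
      · have : (Strategy.node q l r).run anc f = l.run anc f := by
          simp [Strategy.run, h]
        rw [this]; exact Or.inl ⟨f, rfl⟩
      · have : (Strategy.node q l r).run anc f = r.run anc f := by
          simp [Strategy.run, h]
        rw [this]; exact Or.inr ⟨f, rfl⟩
    calc (Set.range ((Strategy.node q l r).run anc)).ncard
        ≤ (Set.range (l.run anc) ∪ Set.range (r.run anc)).ncard :=
          Set.ncard_le_ncard hsub (Set.toFinite _)
      _ ≤ (Set.range (l.run anc)).ncard + (Set.range (r.run anc)).ncard :=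
          Set.ncard_union_le _ _
      _ ≤ 2 ^ l.height + 2 ^ r.height := Nat.add_le_add ihl ihr
      _ ≤ 2 ^ (Strategy.node q l r).height := by
          show _ ≤ 2 ^ (1 + max l.height r.height)
          rw [pow_add, pow_one, two_mul]
          exact Nat.add_le_add (Nat.pow_le_pow_right (by norm_num) (le_max_left _ _))
            (Nat.pow_le_pow_right (by norm_num) (le_max_right _ _))

lemma IsGB.nonempty {V : Type} {anc : V → V → Prop} {C : Set V} {s : Strategy V}
    (h : IsGB anc C s) : C.Nonempty := by
  cases h with
  | leaf v => exact ⟨v, rfl⟩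
  | node C q l r hq _ _ _ => exact ⟨q, hq⟩

lemma IsGB.height_succ_le {V : Type} [Finite V] {anc : V → V → Prop} {C : Set V}
    {s : Strategy V} (h : IsGB anc C s) : s.height + 1 ≤ C.ncard := by
  induction s generalizing C with
  | leaf v => cases h with
    | leaf v => simp [Strategy.height]
  | node q l r ihl ihr =>
    cases h with
    | node C q l r hq hmax hl hr =>
      have h1 := ihl hl
      have h2 := ihr hr
      have hdisj : Disjoint (C ∩ {u | anc u q}) (C \ {u | anc u q}) :=
        Set.disjoint_left.mpr (fun x hx hx' => hx'.2 hx.2)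
      have hunion : (C ∩ {u | anc u q}) ∪ (C \ {u | anc u q}) = C :=
        Set.inter_union_diff _ _
      have : (C ∩ {u | anc u q}).ncard + (C \ {u | anc u q}).ncard = C.ncard := by
        rw [← Set.ncard_union_eq hdisj (Set.toFinite _) (Set.toFinite _), hunion]
      show 1 + max l.height r.height + 1 ≤ C.ncard
      omega

lemma IsGB.not_empty {V : Type} {anc : V → V → Prop} {s : Strategy V}
    (h : IsGB anc ∅ s) : False := by
  obtain ⟨x, hx⟩ := h.nonempty; exact hx

lemma IsGB.height_singleton {V : Type} {anc : V → V → Prop} {v : V} {s : Strategy V}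
    (hrefl : anc v v) (h : IsGB anc ({v} : Set V) s) : s.height = 0 := by
  have key : ∀ (C : Set V) (s : Strategy V), IsGB anc C s → C = {v} → s.height = 0 := by
    intro C s h
    cases h with
    | leaf w => intro _; rfl
    | node C q l r hq hmax hl hr =>
      intro hC
      subst hC
      rcases hq with rfl
      have hemp : ({q} : Set V) \ {u | anc u q} = ∅ := by
        ext x
        simp only [Set.mem_diff, Set.mem_singleton_iff, Set.mem_setOf_eq,
          Set.mem_empty_iff_false, iff_false, not_and, not_not]
        rintro rfl
        exact hrefl
      rw [hemp] at hr
      exact hr.not_empty.elim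
  exact key _ _ h rfl

/-- binary search tree template -/
def bst {V : Type} (q lf : ℕ → V) : ℕ → ℕ → Strategy V
  | 0, lo => .leaf (lf lo)
  | t+1, lo => .node (q (lo + 2^t - 1)) (bst q lf t lo) (bst q lf t (lo + 2^t))

lemma bst_height {V : Type} (q lf : ℕ → V) (t lo : ℕ) : (bst q lf t lo).height = t := by
  induction t generalizing lo with
  | zero => rfl
  | succ t ih => simp [bst, Strategy.height, ih]; omega

lemma bst_run {V : Type} (anc : V → V → Prop) (q lf : ℕ → V) (f : V) (idx : ℕ)
    (hq : ∀ pos, anc f (q pos) ↔ idx ≤ pos) :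
    ∀ t lo, lo ≤ idx → idx < lo + 2^t → (bst q lf t lo).run anc f = lf idx := by
  intro t
  induction t with
  | zero =>
    intro lo h1 h2
    have : idx = lo := by simp at h2; omega
    subst this; rfl
  | succ t ih =>
    intro lo h1 h2
    have hp : 1 ≤ 2^t := Nat.one_le_two_pow
    by_cases h : idx ≤ lo + 2^t - 1
    · have ha : anc f (q (lo + 2^t - 1)) := (hq _).mpr h
      have : (bst q lf (t+1) lo).run anc f = (bst q lf t lo).run anc f := by
        simp [bst, Strategy.run, ha]
      rw [this]
      exact ih lo h1 (by omega)
    · have ha : ¬ anc f (q (lo + 2^t - 1)) := fun hc => h ((hq _).mp hc)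
      have : (bst q lf (t+1) lo).run anc f = (bst q lf t (lo + 2^t)).run anc f := by
        simp [bst, Strategy.run, ha]
      rw [this]
      have h2' : idx < lo + 2^t + 2^t := by
        have : (2:ℕ)^(t+1) = 2^t + 2^t := by ring
        omega
      exact ih (lo + 2^t) (by omega) h2'
section Specific
variable {m : ℕ}

abbrev ancR (m : ℕ) : (Fin m ⊕ Fin m) → (Fin m ⊕ Fin m) → Prop :=
  fun u v => Relation.ReflTransGen (combE (octE m)) u v

lemma ncard_le_set (c : ℕ) (hc : c < m) : {i : Fin m | (i:ℕ) ≤ c}.ncard = c + 1 := by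
  have h : c + 1 ≤ m := hc
  have : {i : Fin m | (i:ℕ) ≤ c} = Set.range (Fin.castLE h) := by
    ext i
    simp only [Set.mem_setOf_eq, Set.mem_range]
    constructor
    · intro hi; exact ⟨⟨(i:ℕ), by omega⟩, by ext; simp⟩
    · rintro ⟨t, rfl⟩; simpa using Nat.lt_succ_iff.mp t.isLt
  rw [this, ← Set.image_univ, Set.ncard_image_of_injective _ (Fin.castLE_injective h),
    Set.ncard_univ, Nat.card_eq_fintype_card, Fintype.card_fin]

lemma ncard_range_inl : (Set.range (Sum.inl : Fin m → Fin m ⊕ Fin m)).ncard = m := by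
  rw [← Set.image_univ, Set.ncard_image_of_injective _ Sum.inl_injective,
    Set.ncard_univ, Nat.card_eq_fintype_card, Fintype.card_fin]

lemma ncard_range_inr : (Set.range (Sum.inr : Fin m → Fin m ⊕ Fin m)).ncard = m := by
  rw [← Set.image_univ, Set.ncard_image_of_injective _ Sum.inr_injective,
    Set.ncard_univ, Nat.card_eq_fintype_card, Fintype.card_fin]

lemma ncard_univ_sum : (Set.univ : Set (Fin m ⊕ Fin m)).ncard = m + m := by
  rw [Set.ncard_univ, Nat.card_eq_fintype_card, Fintype.card_sum, Fintype.card_fin]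

lemma anc_set_sink (hm : 0 < m) :
    {u | ancR m u (.inl ⟨m-1, by omega⟩)} = Set.range Sum.inl := by
  ext u
  cases u with
  | inl i =>
    simp only [Set.mem_setOf_eq, anc_iff, Set.mem_range]
    constructor
    · intro _; exact ⟨i, rfl⟩
    · intro _; exact Or.inr rfl
  | inr i =>
    simp only [Set.mem_setOf_eq, anc_iff, Set.mem_range]
    constructor
    · intro h; exact (h : False).elim
    · rintro ⟨t, h⟩; exact absurd h (by simp)

lemma anc_set_inl (i : Fin m) (hi : (i:ℕ) ≠ m - 1) :
    {u | ancR m u (.inl i)} = {Sum.inl i} := by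
  ext u
  cases u with
  | inl j =>
    simp only [Set.mem_setOf_eq, anc_iff, Set.mem_singleton_iff, Sum.inl.injEq]
    constructor
    · rintro (rfl | h)
      · rfl
      · exact absurd h hi
    · rintro rfl; exact Or.inl rfl
  | inr j =>
    simp only [Set.mem_setOf_eq, anc_iff, Set.mem_singleton_iff]
    constructor
    · intro h; exact (h : False).elim
    · intro h; exact absurd h (by simp)

lemma anc_set_inr (j : Fin m) :
    {u | ancR m u (.inr j)} =
      Sum.inl '' {i : Fin m | (i:ℕ) ≤ (j:ℕ)} ∪ Sum.inr '' {i : Fin m | (i:ℕ) ≤ (j:ℕ)} := by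
  ext u
  cases u with
  | inl i =>
    simp only [Set.mem_setOf_eq, anc_iff, Set.mem_union, Set.mem_image, Sum.inl.injEq,
      Sum.inr.injEq]
    constructor
    · intro h; exact Or.inl ⟨i, h, rfl⟩
    · rintro (⟨t, ht, rfl⟩ | ⟨t, ht, h⟩)
      · exact ht
      · exact absurd h (by simp)
  | inr i =>
    simp only [Set.mem_setOf_eq, anc_iff, Set.mem_union, Set.mem_image, Sum.inl.injEq,
      Sum.inr.injEq]
    constructor
    · intro h; exact Or.inr ⟨i, h, rfl⟩
    · rintro (⟨t, ht, h⟩ | ⟨t, ht, rfl⟩)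
      · exact absurd h (by simp)
      · exact ht

lemma ncard_anc_set_inr (j : Fin m) :
    {u | ancR m u (.inr j)}.ncard = 2 * ((j:ℕ) + 1) := by
  rw [anc_set_inr]
  have hd : Disjoint (Sum.inl '' {i : Fin m | (i:ℕ) ≤ (j:ℕ)})
      (Sum.inr '' {i : Fin m | (i:ℕ) ≤ (j:ℕ)}) := by
    rw [Set.disjoint_left]
    rintro x ⟨a, _, rfl⟩ ⟨b, _, h⟩
    exact absurd h (by simp)
  rw [Set.ncard_union_eq hd (Set.toFinite _) (Set.toFinite _),
    Set.ncard_image_of_injective _ Sum.inl_injective,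
    Set.ncard_image_of_injective _ Sum.inr_injective,
    ncard_le_set _ j.isLt]
  ring


lemma univ_diff_range_inl :
    (Set.univ : Set (Fin m ⊕ Fin m)) \ Set.range Sum.inl = Set.range Sum.inr := by
  ext u
  cases u with
  | inl i => simp
  | inr i => simp

lemma score_sink (hm : 0 < m) :
    scoreIn (ancR m) Set.univ (.inl ⟨m-1, by omega⟩) = m := by
  rw [scoreIn, anc_set_sink hm, Set.univ_inter, univ_diff_range_inl,
    ncard_range_inl, ncard_range_inr, min_self]

lemma score_inl_le (i : Fin m) (hi : (i:ℕ) ≠ m - 1) :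
    scoreIn (ancR m) Set.univ (.inl i) ≤ 1 := by
  rw [scoreIn, anc_set_inl i hi, Set.univ_inter, Set.ncard_singleton]
  exact min_le_left _ _

lemma score_inr_lt (hodd : m % 2 = 1) (j : Fin m) :
    scoreIn (ancR m) Set.univ (.inr j) < m := by
  rw [scoreIn, Set.univ_inter, Set.ncard_diff (Set.subset_univ _) (Set.toFinite _),
    ncard_anc_set_inr, ncard_univ_sum]
  have := j.isLt
  omega

/-- forced behaviour of git bisect on a "star" set of `inl`s containing the sink -/
lemma star_height (hm : 0 < m) :
    ∀ (s : Strategy (Fin m ⊕ Fin m)) (C : Set (Fin m ⊕ Fin m)), IsGB (ancR m) C s →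
      C ⊆ Set.range Sum.inl → Sum.inl ⟨m-1, by omega⟩ ∈ C → s.height + 1 = C.ncard := by
  intro s
  induction s with
  | leaf v =>
    intro C h _ _
    cases h with
    | leaf v => rw [Set.ncard_singleton]; rfl
  | node q l r ihl ihr =>
    intro C h hsub hmem
    cases h with
    | node C q l r hq hmax hl hr =>
      obtain ⟨i, rfl⟩ := hsub hq
      have hi : (i:ℕ) ≠ m - 1 := by
        intro hieq
        -- then the clean branch is empty
        have hempty : C \ {u | ancR m u (.inl i)} = ∅ := by
          apply Set.eq_empty_iff_forall_notMem.mpr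
          rintro x ⟨hxC, hxn⟩
          obtain ⟨a, rfl⟩ := hsub hxC
          exact hxn ((anc_iff _ _).mpr (Or.inr hieq))
        rw [hempty] at hr
        exact hr.not_empty
      rw [anc_set_inl i hi] at hl hr
      have hbug : C ∩ {Sum.inl i} = {Sum.inl i} :=
        Set.inter_eq_self_of_subset_right (Set.singleton_subset_iff.mpr hq)
      rw [hbug] at hl
      have hlh : l.height = 0 := hl.height_singleton Relation.ReflTransGen.refl
      have hsinkne : (Sum.inl ⟨m-1, by omega⟩ : Fin m ⊕ Fin m) ∈ C \ {Sum.inl i} := by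
        refine ⟨hmem, ?_⟩
        simp only [Set.mem_singleton_iff, Sum.inl.injEq]
        intro hc
        exact hi (by rw [← hc])
      have hrh := ihr _ hr (fun x hx => hsub hx.1) hsinkne
      have hcard : (C \ {Sum.inl i}).ncard + 1 = C.ncard :=
        Set.ncard_diff_singleton_add_one hq (Set.toFinite _)
      show 1 + max l.height r.height + 1 = C.ncard
      rw [hlh]
      omega

lemma gb_univ_height (hm3 : 3 ≤ m) (hodd : m % 2 = 1)
    (s : Strategy (Fin m ⊕ Fin m)) (h : IsGB (ancR m) Set.univ s) : s.height = m := by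
  have hm : 0 < m := by omega
  have huc : (Set.univ : Set (Fin m ⊕ Fin m)).ncard = m + m := ncard_univ_sum
  generalize hC : (Set.univ : Set (Fin m ⊕ Fin m)) = C at h
  rw [hC] at huc
  cases h with
  | leaf v =>
    exfalso
    rw [Set.ncard_singleton] at huc
    omega
  | node C q l r hq hmax hl hr =>
      rw [← hC] at hq hmax hl hr
      -- the first query is forced to be the sink
      have hqeq : q = Sum.inl ⟨m-1, by omega⟩ := by
        have h1 := hmax (Sum.inl ⟨m-1, by omega⟩) (Set.mem_univ _)
        rw [score_sink hm] at h1
        cases q with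
        | inl i =>
          by_cases hi : (i:ℕ) = m - 1
          · congr 1; exact Fin.ext hi
          · have := score_inl_le i hi
            omega
        | inr j =>
          have := score_inr_lt hodd j
          omega
      subst hqeq
      rw [anc_set_sink hm, Set.univ_inter] at hl
      rw [anc_set_sink hm, univ_diff_range_inl] at hr
      have hlh : l.height + 1 = m := by
        have := star_height hm l _ hl (fun x hx => hx) ⟨⟨m-1, by omega⟩, rfl⟩
        rwa [ncard_range_inl] at this
      have hrh : r.height + 1 ≤ m := by
        have := hr.height_succ_le
        rwa [ncard_range_inr] at this
      show 1 + max l.height r.height = m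
      omega

/-- For every `k > 2` there is a DAG — namely `comb(O)` where `O` is the octopus on
`2^(k-1) - 1` vertices — on which the optimal worst-case number of queries for the
Regression Search Problem is `k`, while every run of the git bisect algorithm uses
`2^(k-1) - 1` queries in the worst case. -/
theorem gitbisect_pathological (k : ℕ) (hk : 2 < k) :
    let m := 2 ^ (k - 1) - 1
    let anc : (Fin m ⊕ Fin m) → (Fin m ⊕ Fin m) → Prop :=
      fun u v => Relation.ReflTransGen (combE (octE m)) u v
    (∀ s : Strategy (Fin m ⊕ Fin m), (∀ f, s.run anc f = f) → k ≤ s.height) ∧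
    (∃ s : Strategy (Fin m ⊕ Fin m), (∀ f, s.run anc f = f) ∧ s.height = k) ∧
    (∀ s : Strategy (Fin m ⊕ Fin m), IsGB anc Set.univ s → s.height = 2 ^ (k - 1) - 1) := by
  intro m anc
  have hmval : m = 2 ^ (k - 1) - 1 := rfl
  have h4 : 4 ≤ 2 ^ (k - 1) := by
    calc (4:ℕ) = 2 ^ 2 := rfl
    _ ≤ 2 ^ (k - 1) := Nat.pow_le_pow_right (by norm_num) (by omega)
  have hm3 : 3 ≤ m := by omega
  have hm : 0 < m := by omega
  have hpow : 2 ^ (k-1) = 2 * 2 ^ (k-2) := by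
    rw [← pow_succ']
    congr 1
    omega
  have hodd : m % 2 = 1 := by omega
  refine ⟨?_, ?_, ?_⟩
  · -- lower bound for every correct strategy
    intro s hs
    have hsurj : Set.range (s.run anc) = Set.univ :=
      Set.eq_univ_of_forall (fun f => ⟨f, hs f⟩)
    have h1 := run_range_card anc s
    rw [hsurj, ncard_univ_sum] at h1
    by_contra hcon
    have h2 : 2 ^ s.height ≤ 2 ^ (k - 1) :=
      Nat.pow_le_pow_right (by norm_num) (by omega)
    omega
  · -- an optimal strategy of height k
    have hqlt : ∀ p : ℕ, min p (m-1) < m := fun p => by omega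
    refine ⟨Strategy.node (Sum.inl ⟨m-1, by omega⟩)
      (bst (fun p => Sum.inr ⟨min p (m-1), hqlt p⟩)
           (fun p => Sum.inl ⟨min p (m-1), hqlt p⟩) (k-1) 0)
      (bst (fun p => Sum.inr ⟨min p (m-1), hqlt p⟩)
           (fun p => Sum.inr ⟨min p (m-1), hqlt p⟩) (k-1) 0), ?_, ?_⟩
    · intro f
      cases f with
      | inl i =>
        have hilt := i.isLt
        have hanc : anc (.inl i) (.inl ⟨m-1, by omega⟩) := (anc_iff _ _).mpr (Or.inr rfl)
        have hrun : ∀ l r : Strategy (Fin m ⊕ Fin m),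
            (Strategy.node (Sum.inl ⟨m-1, by omega⟩) l r).run anc (.inl i) =
              l.run anc (.inl i) := by
          intro l r
          simp [Strategy.run, hanc]
        rw [hrun]
        have hb := bst_run anc (fun p => Sum.inr ⟨min p (m-1), hqlt p⟩)
          (fun p => Sum.inl ⟨min p (m-1), hqlt p⟩) (Sum.inl i : Fin m ⊕ Fin m) (i:ℕ)
          (fun pos => by
            constructor
            · intro h
              have h' : (i:ℕ) ≤ min pos (m-1) := (anc_iff _ _).mp h
              omega
            · intro h
              exact (anc_iff _ _).mpr (show (i:ℕ) ≤ min pos (m-1) by omega))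
          (k-1) 0 (Nat.zero_le _) (by omega)
        rw [hb]
        exact congrArg Sum.inl (Fin.ext (show min (i:ℕ) (m-1) = (i:ℕ) from by omega))
      | inr i =>
        have hilt := i.isLt
        have hanc : ¬ anc (.inr i) (.inl ⟨m-1, by omega⟩) := fun h => (anc_iff _ _).mp h
        have hrun : ∀ l r : Strategy (Fin m ⊕ Fin m),
            (Strategy.node (Sum.inl ⟨m-1, by omega⟩) l r).run anc (.inr i) =
              r.run anc (.inr i) := by
          intro l r
          simp [Strategy.run, hanc]
        rw [hrun]
        have hb := bst_run anc (fun p => Sum.inr ⟨min p (m-1), hqlt p⟩)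
          (fun p => Sum.inr ⟨min p (m-1), hqlt p⟩) (Sum.inr i : Fin m ⊕ Fin m) (i:ℕ)
          (fun pos => by
            constructor
            · intro h
              have h' : (i:ℕ) ≤ min pos (m-1) := (anc_iff _ _).mp h
              omega
            · intro h
              exact (anc_iff _ _).mpr (show (i:ℕ) ≤ min pos (m-1) by omega))
          (k-1) 0 (Nat.zero_le _) (by omega)
        rw [hb]
        exact congrArg Sum.inr (Fin.ext (show min (i:ℕ) (m-1) = (i:ℕ) from by omega))
    · show 1 + max (bst _ _ _ _).height (bst _ _ _ _).height = k
      rw [bst_height, bst_height]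
      omega
  · -- every git bisect run has height m
    intro s hgb
    rw [← hmval]
    exact gb_univ_height hm3 hodd s hgb
end Specific
end

section
/- In any binary DAG (indegree at most 2) with n vertices and a single sink, there exists a vertex v in B^≥ ∪ B^< with score(v) ≥ (n−1)/3, where V^≥ is the set of vertices with at least as many ancestors as non-ancestors, B^≥ is the set of vertices of V^≥ none of whose parents lie in V^≥, and B^< is the set of parents of vertices of B^≥. -/
/-- `V^≥` relative to `C`: members of `C` with at least as many ancestors as
non-ancestors (within `C`). -/
def VgeIn {V : Type} (anc : V → V → Prop) (C : Set V) : Set V :=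
  {x ∈ C | (C \ {u | anc u x}).ncard ≤ (C ∩ {u | anc u x}).ncard}

/-- `B^≥` relative to `C`: vertices of `V^≥` none of whose parents (within `C`)
belongs to `V^≥`. -/
def BgeIn {V : Type} (E anc : V → V → Prop) (C : Set V) : Set V :=
  {x ∈ VgeIn anc C | ∀ u ∈ C, E u x → u ∉ VgeIn anc C}

/-- `B^<` relative to `C`: the parents (within `C`) of vertices of `B^≥`. -/
def BltIn {V : Type} (E anc : V → V → Prop) (C : Set V) : Set V :=
  {u ∈ C | ∃ x ∈ BgeIn E anc C, E u x}

lemma anc_cases' {V : Type} {E : V → V → Prop} {u x : V}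
    (h : Relation.ReflTransGen E u x) :
    u = x ∨ ∃ c, E c x ∧ Relation.ReflTransGen E u c := by
  rcases h.cases_tail with h | ⟨c, hc, hE⟩
  · exact Or.inl h.symm
  · exact Or.inr ⟨c, hE, hc⟩

/-- In any binary DAG with `n` vertices and a single sink (reachable from all vertices),
there is a vertex `v ∈ B^≥ ∪ B^<` with `score(v) ≥ (n-1)/3`. -/
theorem bsets_good_score {V : Type} [Fintype V] [Nonempty V] (E : V → V → Prop)
    (hacyc : ∀ v : V, ¬ Relation.TransGen E v v)
    (hbin : ∀ v : V, {u | E u v}.ncard ≤ 2)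
    (b : V) (hb : ∀ v : V, Relation.ReflTransGen E v b) :
    ∃ v ∈ BgeIn E (fun u w => Relation.ReflTransGen E u w) Set.univ ∪
          BltIn E (fun u w => Relation.ReflTransGen E u w) Set.univ,
      ((Fintype.card V : ℝ) - 1) / 3 ≤
        (scoreIn (fun u w => Relation.ReflTransGen E u w) Set.univ v : ℝ) := by
  classical
  set anc : V → V → Prop := fun u w => Relation.ReflTransGen E u w with hanc
  set A : V → Set V := fun x => {u | anc u x} with hA
  set n := Fintype.card V with hn
  have ha_le : ∀ x, (A x).ncard ≤ n := fun x => by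
    simpa [hn, Set.ncard_univ] using
      Set.ncard_le_ncard (Set.subset_univ (A x)) Set.finite_univ
  have hdiff : ∀ x, (Set.univ \ A x).ncard = n - (A x).ncard := fun x => by
    rw [Set.ncard_diff (Set.subset_univ _), Set.ncard_univ, Nat.card_eq_fintype_card]
  have hscore : ∀ x, scoreIn anc Set.univ x = min ((A x).ncard) (n - (A x).ncard) := by
    intro x
    show min ((Set.univ ∩ A x).ncard) ((Set.univ \ A x).ncard) = _
    rw [Set.univ_inter, hdiff]
  have hVge : ∀ x, x ∈ VgeIn anc Set.univ ↔ n - (A x).ncard ≤ (A x).ncard := by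
    intro x
    constructor
    · intro hx
      have := hx.2
      rwa [Set.univ_inter, hdiff] at this
    · intro hx
      refine ⟨Set.mem_univ x, ?_⟩
      rwa [Set.univ_inter, hdiff]
  -- b is in Vge
  have hAb : A b = Set.univ := Set.eq_univ_of_forall (fun u => hb u)
  have hbV : b ∈ VgeIn anc Set.univ := by
    rw [hVge, hAb, Set.ncard_univ, Nat.card_eq_fintype_card, ← hn, Nat.sub_self]
    exact Nat.zero_le _
  -- Bge is nonempty
  haveI : IsIrrefl V (Relation.TransGen E) := ⟨hacyc⟩
  have wf : WellFounded (Relation.TransGen E) := Finite.wellFounded_of_trans_of_irrefl _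
  have hBge : ∃ x, x ∈ BgeIn E anc Set.univ := by
    have key : ∀ v, v ∈ VgeIn anc Set.univ → ∃ x, x ∈ BgeIn E anc Set.univ := by
      intro v
      induction v using wf.induction with
      | _ v ih =>
        intro hv
        by_cases h : ∀ u ∈ Set.univ, E u v → u ∉ VgeIn anc Set.univ
        · exact ⟨v, hv, h⟩
        · push_neg at h
          obtain ⟨u, -, hE, hu⟩ := h
          exact ih u (Relation.TransGen.single hE) hu
    exact key b hbV
  obtain ⟨x, hxB⟩ := hBge
  have hxV : x ∈ VgeIn anc Set.univ := hxB.1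
  have hxge : n - (A x).ncard ≤ (A x).ncard := (hVge x).1 hxV
  have hn1 : (1:ℝ) ≤ (n:ℝ) := by
    have : 0 < n := by rw [hn]; exact Fintype.card_pos
    exact_mod_cast this
  by_cases hcase : ((n:ℝ) - 1)/3 ≤ ((scoreIn anc Set.univ x : ℕ) : ℝ)
  · exact ⟨x, Or.inl hxB, hcase⟩
  · push_neg at hcase
    have hsx : scoreIn anc Set.univ x = n - (A x).ncard := by
      rw [hscore]; exact min_eq_right hxge
    set a := (A x).ncard with ha
    have hcast : ((n - a : ℕ) : ℝ) = (n:ℝ) - (a:ℝ) := by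
      exact_mod_cast Nat.cast_sub (ha_le x)
    have h2 : (n:ℝ) - (a:ℝ) < ((n:ℝ)-1)/3 := by
      rw [hsx, hcast] at hcase; exact hcase
    have ha2 : 2 ≤ a := by
      have h1 : (1:ℝ) < (a:ℝ) := by linarith
      have : 1 < a := by exact_mod_cast h1
      omega
    -- find a parent with many ancestors
    have hP : ∃ p, E p x ∧ a ≤ 1 + 2 * (A p).ncard := by
      have hPne : {u | E u x}.Nonempty := by
        obtain ⟨u, hu, hne⟩ :=
          Set.exists_ne_of_one_lt_ncard (show 1 < (A x).ncard by omega) x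
        rcases anc_cases' (show Relation.ReflTransGen E u x from hu) with h | ⟨c, hc, _⟩
        · exact absurd h hne
        · exact ⟨c, hc⟩
      have hPpos : 0 < {u | E u x}.ncard :=
        (Set.ncard_pos (Set.toFinite _)).mpr hPne
      have hcard : {u | E u x}.ncard = 1 ∨ {u | E u x}.ncard = 2 := by
        have := hbin x; omega
      rcases hcard with h1 | h2
      · obtain ⟨p, hp⟩ := Set.ncard_eq_one.mp h1
        have hpP : p ∈ {u | E u x} := by rw [hp]; rfl
        have hsub : A x ⊆ insert x (A p) := by
          intro u hu
          rcases anc_cases' (show Relation.ReflTransGen E u x from hu) with h | ⟨c, hc, hrc⟩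
          · exact h ▸ Set.mem_insert _ _
          · have hcp : c = p := by
              have : c ∈ {u | E u x} := hc
              rw [hp] at this; exact this
            exact Set.mem_insert_of_mem _ (show anc u p from hcp ▸ hrc)
        have hle := Set.ncard_le_ncard hsub (Set.toFinite _)
        have hins := Set.ncard_insert_le x (A p)
        exact ⟨p, hpP, by omega⟩
      · obtain ⟨p, q, hpq, hP2⟩ := Set.ncard_eq_two.mp h2
        have hpP : p ∈ {u | E u x} := by rw [hP2]; exact Set.mem_insert _ _
        have hqP : q ∈ {u | E u x} := by rw [hP2]; exact Set.mem_insert_of_mem _ rfl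
        have hsub : A x ⊆ insert x (A p ∪ A q) := by
          intro u hu
          rcases anc_cases' (show Relation.ReflTransGen E u x from hu) with h | ⟨c, hc, hrc⟩
          · exact h ▸ Set.mem_insert _ _
          · have : c ∈ ({p, q} : Set V) := by rw [← hP2]; exact hc
            rcases this with h | h
            · exact Set.mem_insert_of_mem _ (Or.inl (show anc u p from h ▸ hrc))
            · exact Set.mem_insert_of_mem _ (Or.inr (show anc u q from h ▸ hrc))
        have hle := Set.ncard_le_ncard hsub (Set.toFinite _)
        have hins := Set.ncard_insert_le x (A p ∪ A q)
        have hun := Set.ncard_union_le (A p) (A q)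
        rcases le_total ((A q).ncard) ((A p).ncard) with h | h
        · exact ⟨p, hpP, by omega⟩
        · exact ⟨q, hqP, by omega⟩
    obtain ⟨p, hpE, hpbound⟩ := hP
    have hpnotV : p ∉ VgeIn anc Set.univ := hxB.2 p (Set.mem_univ p) hpE
    have hplt : ¬ (n - (A p).ncard ≤ (A p).ncard) := fun h => hpnotV ((hVge p).2 h)
    have hsp : scoreIn anc Set.univ p = (A p).ncard := by
      rw [hscore]; exact min_eq_left (by omega)
    refine ⟨p, Or.inr ⟨Set.mem_univ p, x, hxB, hpE⟩, ?_⟩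
    rw [hsp]
    have hb1 : (a:ℝ) ≤ 1 + 2 * ((A p).ncard : ℝ) := by exact_mod_cast hpbound
    linarith
end

section
/- For any binary DAG D with n vertices and a unique sink reachable from all vertices, the optimal worst-case number of queries opt for the Regression Search Problem satisfies ⌈log₂ n⌉ ≤ opt ≤ ⌈log_φ n⌉, where φ is the golden ratio. -/
/-- The golden ratio. -/
noncomputable def phi : ℝ := (1 + Real.sqrt 5) / 2

/-!
A strategy identifying `n` candidates has at least `n` leaves, hence height at least `log₂ n`.

For the upper bound, a candidate set `S` with `|S| ≤ F (h + 2)` (Fibonacci numbers) is searched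
with `h` queries. Write `A v` for the ancestors of `v` in `S`. As `v` has at most two parents, its
parent `u` with the larger `A u` satisfies `|A v \ A u| ≤ |A u| + 1`. Walking up from the sink
along such heavy parents while `|A v| > F (h + 1)`, either we reach a `q` with
`F h ≤ |A q| ≤ F (h + 1)`, and querying `q` leaves at most `F (h + 1)` candidates on either side,
or we jump from a `q` with `|A q| > F (h + 1)` to a `u` with `|A u| < F h`; then querying `q` and,
on a positive answer, `u` leaves at most `F (h + 1)` candidates after one query and at most `F h`
after two. Finally `φ ^ h ≤ F (h + 2)`.
-/

open Relation Finset
open scoped Classical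

namespace Strategy

variable {V : Type} (anc : V → V → Prop)

def Identifies (s : Strategy V) (S : Finset V) : Prop :=
  ∀ f ∈ S, s.run anc f = f

variable {anc}

theorem identifies_leaf_iff {v : V} {S : Finset V} :
    (leaf v).Identifies anc S ↔ S ⊆ {v} := by
  simp only [Identifies, run, subset_iff, mem_singleton]
  exact forall₂_congr fun _ _ => eq_comm

theorem identifies_node_iff {q : V} {l r : Strategy V} {S : Finset V} :
    (node q l r).Identifies anc S ↔
      l.Identifies anc (S.filter (anc · q)) ∧ r.Identifies anc (S.filter (¬anc · q)) := by
  simp only [Identifies, run, mem_filter]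
  constructor
  · intro h
    exact ⟨fun f ⟨hf, hfq⟩ => by simpa [hfq] using h f hf,
      fun f ⟨hf, hfq⟩ => by simpa [hfq] using h f hf⟩
  · rintro ⟨hl, hr⟩ f hf
    by_cases hfq : anc f q
    · simpa [hfq] using hl f ⟨hf, hfq⟩
    · simpa [hfq] using hr f ⟨hf, hfq⟩

theorem Identifies.card_le_two_pow_height {s : Strategy V} {S : Finset V}
    (hs : s.Identifies anc S) : S.card ≤ 2 ^ s.height := by
  induction s generalizing S with
  | leaf v => simpa [height] using card_le_card (identifies_leaf_iff.mp hs)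
  | node q l r ihl ihr =>
    obtain ⟨hl, hr⟩ := identifies_node_iff.mp hs
    have hsplit := card_filter_add_card_filter_not (s := S) (p := (anc · q))
    have hmax : 2 ^ l.height + 2 ^ r.height ≤ 2 ^ (1 + max l.height r.height) := by
      rw [pow_add, pow_one, two_mul]
      gcongr <;> first | exact one_le_two | omega
    simp only [height]
    linarith [ihl hl, ihr hr]

end Strategy

section Searchable

variable {V : Type} (anc : V → V → Prop)

/-- `opt ≤ h` for the candidate set `S`. -/
def Searchable (h : ℕ) (S : Finset V) : Prop :=
  ∃ s : Strategy V, s.height ≤ h ∧ s.Identifies anc S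

variable {anc}

theorem Searchable.mono_height {h h' : ℕ} {S : Finset V} (hS : Searchable anc h S)
    (hh : h ≤ h') : Searchable anc h' S :=
  let ⟨s, hs, hid⟩ := hS
  ⟨s, hs.trans hh, hid⟩

theorem searchable_of_card_le_one [Nonempty V] (h : ℕ) {S : Finset V} (hS : S.card ≤ 1) :
    Searchable anc h S :=
  let ⟨v, hv⟩ := card_le_one_iff_subset_singleton.mp hS
  ⟨.leaf v, Nat.zero_le h, Strategy.identifies_leaf_iff.mpr hv⟩

theorem searchable_node {h : ℕ} {S : Finset V} (q : V)
    (hyes : Searchable anc h (S.filter (anc · q)))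
    (hno : Searchable anc h (S.filter (¬anc · q))) :
    Searchable anc (h + 1) S := by
  obtain ⟨l, hl, hlid⟩ := hyes
  obtain ⟨r, hr, hrid⟩ := hno
  refine ⟨.node q l r, ?_, Strategy.identifies_node_iff.mpr ⟨hlid, hrid⟩⟩
  simp only [Strategy.height]
  omega

end Searchable

theorem Set.exists_forall_eq_or_eq_of_ncard_le_two {α : Type*} [Finite α] {s : Set α}
    (hs : s.ncard ≤ 2) {a : α} (ha : a ∈ s) : ∃ w ∈ s, ∀ c ∈ s, c = a ∨ c = w := by
  by_cases hother : ∃ w ∈ s, w ≠ a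
  · obtain ⟨w, hw, hwa⟩ := hother
    have hrest : (s \ {a}).ncard ≤ 1 := by
      rw [Set.ncard_sdiff_singleton_of_mem ha]
      omega
    refine ⟨w, hw, fun c hc => or_iff_not_imp_left.mpr fun hca => ?_⟩
    exact (Set.ncard_le_one_iff).mp hrest ⟨hc, hca⟩ ⟨hw, hwa⟩
  · push Not at hother
    exact ⟨a, ha, fun c hc => Or.inl (hother c hc)⟩

section Ancestors

variable {V : Type} (E : V → V → Prop)

noncomputable def ancestorsIn (S : Finset V) (v : V) : Finset V :=
  S.filter (ReflTransGen E · v)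

variable {E}

@[simp]
theorem mem_ancestorsIn {S : Finset V} {v x : V} :
    x ∈ ancestorsIn E S v ↔ x ∈ S ∧ ReflTransGen E x v :=
  mem_filter

theorem ancestorsIn_eq_self {S : Finset V} {b : V} (hb : ∀ x, ReflTransGen E x b) :
    ancestorsIn E S b = S :=
  filter_true_of_mem fun x _ => hb x

theorem exists_mem_ancestorsIn_of_ne {S : Finset V} {v x : V} (hx : x ∈ ancestorsIn E S v)
    (hxv : x ≠ v) : ∃ c, E c v ∧ x ∈ ancestorsIn E S c := by
  rw [mem_ancestorsIn] at hx
  rcases hx.2.cases_tail with rfl | ⟨c, hxc, hcv⟩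
  · exact absurd rfl hxv
  · exact ⟨c, hcv, mem_ancestorsIn.mpr ⟨hx.1, hxc⟩⟩

theorem card_filter_not_ancestorsIn_le {S : Finset V} {u v w : V}
    (hpar : ∀ c, E c v → c = u ∨ c = w) :
    ((ancestorsIn E S v).filter (¬ReflTransGen E · u)).card ≤ (ancestorsIn E S w).card + 1 := by
  refine (card_le_card fun x hx => ?_).trans (card_insert_le v _)
  obtain ⟨hxv, hxu⟩ := mem_filter.mp hx
  rw [mem_insert]
  by_cases hx : x = v
  · exact Or.inl hx
  obtain ⟨c, hcv, hxc⟩ := exists_mem_ancestorsIn_of_ne hxv hx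
  rcases hpar c hcv with rfl | rfl
  · exact absurd (mem_ancestorsIn.mp hxc).2 hxu
  · exact Or.inr hxc

theorem exists_heavy_parent [Finite V] {S : Finset V} {v : V} (hbin : {u | E u v}.ncard ≤ 2)
    (hv : 1 < (ancestorsIn E S v).card) :
    ∃ u, E u v ∧
      ((ancestorsIn E S v).filter (¬ReflTransGen E · u)).card ≤ (ancestorsIn E S u).card + 1 := by
  obtain ⟨a, ha⟩ : ∃ a, E a v := by
    by_contra! hsource
    have hsub : ancestorsIn E S v ⊆ {v} := fun x hx => mem_singleton.mpr <| by
      by_contra hxv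
      obtain ⟨c, hcv, -⟩ := exists_mem_ancestorsIn_of_ne hx hxv
      exact hsource c hcv
    exact absurd (card_le_card hsub) (by simpa using hv)
  obtain ⟨w, hw, hpar⟩ := Set.exists_forall_eq_or_eq_of_ncard_le_two hbin ha
  rcases le_total (ancestorsIn E S w).card (ancestorsIn E S a).card with hwa | haw
  · exact ⟨a, ha, (card_filter_not_ancestorsIn_le hpar).trans (by omega)⟩
  · refine ⟨w, hw, (card_filter_not_ancestorsIn_le (w := a) fun c hc => ?_).trans (by omega)⟩
    exact (hpar c hc).symm

theorem exists_balanced_query [Finite V] (hacyc : ∀ v : V, ¬TransGen E v v)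
    (hbin : ∀ v : V, {u | E u v}.ncard ≤ 2) (S : Finset V) (h : ℕ) (v : V)
    (hv : Nat.fib (h + 1) < (ancestorsIn E S v).card) :
    ∃ q, Nat.fib h ≤ (ancestorsIn E S q).card ∧
      ((ancestorsIn E S q).card ≤ Nat.fib (h + 1) ∨
        ∃ u, ((ancestorsIn E S q).filter (ReflTransGen E · u)).card < Nat.fib h ∧
          ((ancestorsIn E S q).filter (¬ReflTransGen E · u)).card ≤ Nat.fib h) := by
  have : Std.Irrefl (TransGen E) := ⟨hacyc⟩
  have hwf : WellFounded E :=
    Subrelation.wf TransGen.single (Finite.wellFounded_of_trans_of_irrefl (TransGen E))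
  induction v using hwf.induction with
  | _ v ih =>
  have hfib : 0 < Nat.fib (h + 1) := Nat.fib_pos.mpr h.succ_pos
  obtain ⟨u, huv, hrest⟩ := exists_heavy_parent (S := S) (hbin v) (by omega)
  rcases lt_or_ge (Nat.fib (h + 1)) (ancestorsIn E S u).card with hbig | hu
  · exact ih u huv hbig
  rcases le_or_gt (Nat.fib h) (ancestorsIn E S u).card with hmid | hsmall
  · exact ⟨u, hmid, Or.inl hu⟩
  have hyes : (ancestorsIn E S v).filter (ReflTransGen E · u) ⊆ ancestorsIn E S u :=
    fun x hx => by
      obtain ⟨hxv, hxu⟩ := mem_filter.mp hx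
      exact mem_ancestorsIn.mpr ⟨(mem_ancestorsIn.mp hxv).1, hxu⟩
  exact ⟨v, (Nat.fib_mono h.le_succ).trans hv.le, Or.inr
    ⟨u, (card_le_card hyes).trans_lt hsmall, by omega⟩⟩

theorem searchable_of_card_le_fib [Finite V] (hacyc : ∀ v : V, ¬TransGen E v v)
    (hbin : ∀ v : V, {u | E u v}.ncard ≤ 2) {b : V} (hb : ∀ v : V, ReflTransGen E v b)
    (h : ℕ) (S : Finset V) (hS : S.card ≤ Nat.fib (h + 2)) :
    Searchable (ReflTransGen E) h S := by
  have : Nonempty V := ⟨b⟩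
  induction h using Nat.strong_induction_on generalizing S with
  | _ h ih =>
  rcases le_or_gt S.card 1 with hone | hmany
  · exact searchable_of_card_le_one h hone
  obtain ⟨h, rfl⟩ : ∃ k, h = k + 1 := Nat.exists_eq_add_one.mpr <| Nat.pos_of_ne_zero <| by
    rintro rfl
    exact absurd hS (by simpa using hmany)
  rcases le_or_gt S.card (Nat.fib (h + 2)) with hsmall | hbig
  · exact (ih h h.lt_succ_self S hsmall).mono_height h.le_succ
  obtain ⟨q, hq, hY⟩ := exists_balanced_query hacyc hbin S (h + 1) b
    (by rwa [ancestorsIn_eq_self hb])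
  have hsplit := card_filter_add_card_filter_not (s := S) (p := (ReflTransGen E · q))
  have hfib : Nat.fib (h + 1 + 2) = Nat.fib (h + 1) + Nat.fib (h + 2) := Nat.fib_add_two
  unfold ancestorsIn at hq hY
  refine searchable_node q ?_ (ih h h.lt_succ_self _ (by omega))
  rcases hY with hY | ⟨u, hyes, hno⟩
  · exact ih h h.lt_succ_self _ hY
  cases h with
  | zero =>
    refine searchable_of_card_le_one 0 ?_
    have := card_filter_add_card_filter_not
      (s := S.filter (ReflTransGen E · q)) (p := (ReflTransGen E · u))
    have hfib_one : Nat.fib (0 + 1) = 1 := rfl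
    omega
  | succ h =>
    exact searchable_node u (ih h (by omega) _ hyes.le) (ih h (by omega) _ hno)

end Ancestors

theorem Real.goldenRatio_pow_le_fib (n : ℕ) : Real.goldenRatio ^ n ≤ Nat.fib (n + 2) := by
  rw [← Real.fib_succ_sub_goldenConj_mul_fib, Nat.fib_add_two, Nat.cast_add]
  nlinarith [Real.neg_one_lt_goldenConj, Real.goldenConj_neg,
    (Nat.cast_nonneg (Nat.fib n) : (0 : ℝ) ≤ _)]

theorem Real.le_pow_natCeil_logb {b x : ℝ} (hb : 1 < b) (hx : 0 < x) :
    x ≤ b ^ ⌈Real.logb b x⌉₊ := by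
  rw [← Real.rpow_natCast, ← Real.logb_le_iff_le_rpow hb hx]
  exact Nat.le_ceil _

theorem rsp_binary_opt_bounds_general {V : Type} [Fintype V] (E : V → V → Prop)
    (hacyc : ∀ v : V, ¬ Relation.TransGen E v v)
    (hbin : ∀ v : V, {u | E u v}.ncard ≤ 2)
    (b : V) (hb : ∀ v : V, Relation.ReflTransGen E v b) :
    (∀ s : Strategy V, (∀ f : V, s.run (fun u w => Relation.ReflTransGen E u w) f = f) →
      Nat.clog 2 (Fintype.card V) ≤ s.height) ∧
    (∃ s : Strategy V, (∀ f : V, s.run (fun u w => Relation.ReflTransGen E u w) f = f) ∧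
      s.height ≤ ⌈Real.logb phi (Fintype.card V)⌉₊) := by
  refine ⟨fun s hs => ?_, ?_⟩
  · rw [Nat.clog_le_iff_le_pow one_lt_two, ← card_univ]
    exact Strategy.Identifies.card_le_two_pow_height fun f _ => hs f
  · have hcard : Fintype.card V ≤ Nat.fib (⌈Real.logb phi (Fintype.card V)⌉₊ + 2) := by
      have hpos : (0 : ℝ) < Fintype.card V := Nat.cast_pos.mpr (Fintype.card_pos_iff.mpr ⟨b⟩)
      exact_mod_cast (Real.le_pow_natCeil_logb Real.one_lt_goldenRatio hpos).trans
        (Real.goldenRatio_pow_le_fib _)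
    obtain ⟨s, hs, hid⟩ := searchable_of_card_le_fib hacyc hbin hb _ univ (by simpa using hcard)
    exact ⟨s, fun f => hid f (mem_univ f), hs⟩

/-- For any binary DAG with `n` vertices and a unique sink reachable from all vertices,
the optimal worst-case number of queries `opt` for the Regression Search Problem
satisfies `⌈log₂ n⌉ ≤ opt ≤ ⌈log_φ n⌉`: every correct strategy uses at least `⌈log₂ n⌉`
queries and some correct strategy uses at most `⌈log_φ n⌉` queries. -/
theorem rsp_binary_opt_bounds {V : Type} [Fintype V] [Nonempty V] (E : V → V → Prop)
    (hacyc : ∀ v : V, ¬ Relation.TransGen E v v)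
    (hbin : ∀ v : V, {u | E u v}.ncard ≤ 2)
    (b : V) (hb : ∀ v : V, Relation.ReflTransGen E v b) :
    (∀ s : Strategy V, (∀ f : V, s.run (fun u w => Relation.ReflTransGen E u w) f = f) →
      Nat.clog 2 (Fintype.card V) ≤ s.height) ∧
    (∃ s : Strategy V, (∀ f : V, s.run (fun u w => Relation.ReflTransGen E u w) f = f) ∧
      s.height ≤ ⌈Real.logb phi (Fintype.card V)⌉₊) :=
  rsp_binary_opt_bounds_general E hacyc hbin b hb
end

section
/- For every i ≥ 1, the optimal worst-case number of queries for the Regression Search Problem on the i-th Fibonacci tree F_i is exactly i − 1. -/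
/-- Shapes of rooted in-trees: a single vertex, a sink with one parent subtree, or a
sink with two parent subtrees. -/
inductive ITree : Type where
  | leaf : ITree
  | node1 : ITree → ITree
  | node2 : ITree → ITree → ITree

/-- The vertices of an in-tree shape. -/
def Pos : ITree → Type
  | .leaf => PUnit
  | .node1 t => Pos t ⊕ PUnit
  | .node2 t s => (Pos t ⊕ Pos s) ⊕ PUnit

def posFintype : ∀ t : ITree, Fintype (Pos t)
  | .leaf => inferInstanceAs (Fintype PUnit)
  | .node1 t =>
      letI := posFintype t
      inferInstanceAs (Fintype (Pos t ⊕ PUnit))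
  | .node2 t s =>
      letI := posFintype t
      letI := posFintype s
      inferInstanceAs (Fintype ((Pos t ⊕ Pos s) ⊕ PUnit))

attribute [instance] posFintype

/-- The sink (root) of an in-tree. -/
def sinkOf : ∀ t : ITree, Pos t
  | .leaf => PUnit.unit
  | .node1 _ => Sum.inr PUnit.unit
  | .node2 _ _ => Sum.inr PUnit.unit

/-- The arcs of an in-tree: all arcs are directed towards the sink. -/
def edgeOf : ∀ t : ITree, Pos t → Pos t → Prop
  | .node1 t, .inl a, .inl b => edgeOf t a b
  | .node1 t, .inl a, .inr _ => a = sinkOf t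
  | .node2 t _, .inl (.inl a), .inl (.inl b) => edgeOf t a b
  | .node2 _ s, .inl (.inr a), .inl (.inr b) => edgeOf s a b
  | .node2 t _, .inl (.inl a), .inr _ => a = sinkOf t
  | .node2 _ s, .inl (.inr a), .inr _ => a = sinkOf s
  | _, _, _ => False

/-- The `i`-th Fibonacci tree `F_i` (indices `i ≥ 1`; `FibTree 0` is a dummy value):
`F₁` is a single vertex, `F₂` is a single arc, and `F_{i+1}` is a sink whose two parents
are the sinks of disjoint copies of `F_i` and `F_{i-1}`. -/
def FibTree : ℕ → ITree
  | 0 => .leaf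
  | 1 => .leaf
  | 2 => .node1 .leaf
  | (n + 3) => .node2 (FibTree (n + 2)) (FibTree (n + 1))

/-!
The upper bound is the obvious recursion: on `F_{i+1}` query the sink of the copy of `F_i`;
on a "no", query the sink of the copy of `F_{i-1}`; this costs `max (1 + (i - 1), 2 + (i - 2))`.

The lower bound is an adversary argument. A candidate set `S` carries a Fibonacci pattern of
order `k` if it contains a topological copy of `F_{k+1}` in the ancestor order. A query `q`
splits `S` into the ancestors of `q` and the rest; because the descendants of a vertex form a
chain, one of the two halves still carries a pattern of order `k - 1`. So a pattern of order `k`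
forces `k` queries, and `F_i` itself is a pattern of order `i - 1`.
-/

open Relation

namespace Strategy

variable {V W : Type}

def map (e : V → W) : Strategy V → Strategy W
  | leaf v => leaf (e v)
  | node q l r => node (e q) (l.map e) (r.map e)

@[simp]
lemma height_map (e : V → W) : ∀ s : Strategy V, (s.map e).height = s.height
  | leaf _ => rfl
  | node _ l r => by simp only [map, height, height_map e l, height_map e r]

lemma run_map {ancV : V → V → Prop} {ancW : W → W → Prop} (e : V → W)
    (he : ∀ u v, ancW (e u) (e v) ↔ ancV u v) :
    ∀ (s : Strategy V) (f : V), (s.map e).run ancW (e f) = e (s.run ancV f)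
  | leaf _, _ => rfl
  | node q l r, f => by
      by_cases h : ancV f q
      · simp only [map, run, if_pos ((he f q).2 h), if_pos h, run_map e he l]
      · simp only [map, run, if_neg (mt (he f q).1 h), if_neg h, run_map e he r]

end Strategy

section Pattern

variable {V W : Type} {r : V → V → Prop}

lemma not_reflTransGen_of_incomparable (hr : Relator.RightUnique r) {a q u : V}
    (haq : ¬ ReflTransGen r a q) (hqa : ¬ ReflTransGen r q a) (hua : ReflTransGen r u a) :
    ¬ ReflTransGen r u q :=
  fun huq => (hua.total_of_right_unique hr huq).elim haq hqa

/-- `FibPattern r k S v`: the ancestor order `ReflTransGen r` contains a topological copy of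
`F_{k+1}` rooted at an ancestor of `v`. Only the vertices at the bottom of the recursion (orders
`0` and `1`) have to be candidates, i.e. lie in `S`. -/
def FibPattern (r : V → V → Prop) : ℕ → Set V → V → Prop
  | 0, S, v => ∃ u ∈ S, ReflTransGen r u v
  | 1, S, v => ∃ u₁ ∈ S, ∃ u₂ ∈ S, u₁ ≠ u₂ ∧ ReflTransGen r u₁ v ∧ ReflTransGen r u₂ v
  | k + 2, S, v => ∃ a b, ReflTransGen r a v ∧ ReflTransGen r b v ∧
      ¬ ReflTransGen r a b ∧ ¬ ReflTransGen r b a ∧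
      FibPattern r (k + 1) S a ∧ FibPattern r k S b

namespace FibPattern

lemma trans {k : ℕ} {S : Set V} {a v : V} (h : FibPattern r k S a)
    (hav : ReflTransGen r a v) : FibPattern r k S v :=
  match k, h with
  | 0, ⟨u, hu, hua⟩ => ⟨u, hu, hua.trans hav⟩
  | 1, ⟨u₁, hu₁, u₂, hu₂, hne, h₁, h₂⟩ => ⟨u₁, hu₁, u₂, hu₂, hne, h₁.trans hav, h₂.trans hav⟩
  | _ + 2, ⟨a', b', ha, hb, hab, hba, pa, pb⟩ =>
      ⟨a', b', ha.trans hav, hb.trans hav, hab, hba, pa, pb⟩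

lemma mono {S S' : Set V} : ∀ {k : ℕ} {v : V}, FibPattern r k S v →
    (∀ u ∈ S, ReflTransGen r u v → u ∈ S') → FibPattern r k S' v
  | 0, _, ⟨u, hu, huv⟩, H => ⟨u, H u hu huv, huv⟩
  | 1, _, ⟨u₁, hu₁, u₂, hu₂, hne, h₁, h₂⟩, H =>
      ⟨u₁, H u₁ hu₁ h₁, u₂, H u₂ hu₂ h₂, hne, h₁, h₂⟩
  | _ + 2, _, ⟨a, b, hav, hbv, hab, hba, pa, pb⟩, H =>
      ⟨a, b, hav, hbv, hab, hba, pa.mono fun u hu hua => H u hu (hua.trans hav),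
        pb.mono fun u hu hub => H u hu (hub.trans hbv)⟩

lemma restrict {k : ℕ} {S : Set V} {v : V} (h : FibPattern r k S v) :
    FibPattern r k {x ∈ S | ReflTransGen r x v} v :=
  h.mono fun _ hu huv => ⟨hu, huv⟩

lemma pred : ∀ {k : ℕ} {S : Set V} {v : V}, FibPattern r (k + 1) S v → FibPattern r k S v
  | 0, _, _, ⟨u, hu, _, _, _, h, _⟩ => ⟨u, hu, h⟩
  | 1, _, _, ⟨_, _, hav, _, _, _, pa, _⟩ => pa.trans hav
  | _ + 2, _, _, ⟨a, b, hav, hbv, hab, hba, pa, pb⟩ => ⟨a, b, hav, hbv, hab, hba, pa.pred, pb.pred⟩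

lemma of_le {k k' : ℕ} {S : Set V} {v : V} (h : FibPattern r k S v) (hk : k' ≤ k) :
    FibPattern r k' S v := by
  induction hk with
  | refl => exact h
  | step _ ih => exact ih h.pred

lemma exists_ne {k : ℕ} {S : Set V} {v : V} (h : FibPattern r (k + 1) S v) :
    ∃ u₁ ∈ S, ∃ u₂ ∈ S, u₁ ≠ u₂ := by
  obtain ⟨u₁, hu₁, u₂, hu₂, hne, -⟩ := h.of_le (Nat.le_add_left 1 k)
  exact ⟨u₁, hu₁, u₂, hu₂, hne⟩

lemma map {p : W → W → Prop} (e : V → W) (he : Function.Injective e)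
    (hep : ∀ u v, ReflTransGen p (e u) (e v) ↔ ReflTransGen r u v) {S : Set V} {S' : Set W}
    (hS : Set.MapsTo e S S') : ∀ {k : ℕ} {v : V}, FibPattern r k S v → FibPattern p k S' (e v)
  | 0, _, ⟨u, hu, huv⟩ => ⟨e u, hS hu, (hep u _).2 huv⟩
  | 1, _, ⟨u₁, hu₁, u₂, hu₂, hne, h₁, h₂⟩ =>
      ⟨e u₁, hS hu₁, e u₂, hS hu₂, he.ne hne, (hep _ _).2 h₁, (hep _ _).2 h₂⟩
  | _ + 2, _, ⟨a, b, hav, hbv, hab, hba, pa, pb⟩ =>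
      ⟨e a, e b, (hep _ _).2 hav, (hep _ _).2 hbv, mt (hep _ _).1 hab, mt (hep _ _).1 hba,
        pa.map e he hep hS, pb.map e he hep hS⟩

lemma succ_of_incomparable (hr : Relator.RightUnique r) {j : ℕ} {S : Set V} {a b v : V}
    (pa : FibPattern r j S a) (pb : FibPattern r (j - 1) S b)
    (hab : ¬ ReflTransGen r a b) (hba : ¬ ReflTransGen r b a)
    (hav : ReflTransGen r a v) (hbv : ReflTransGen r b v) : FibPattern r (j + 1) S v :=
  match j, pa, pb with
  | 0, ⟨u₁, hu₁, h₁⟩, ⟨u₂, hu₂, h₂⟩ =>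
      ⟨u₁, hu₁, u₂, hu₂, fun h => not_reflTransGen_of_incomparable hr hab hba h₁ (h ▸ h₂),
        h₁.trans hav, h₂.trans hbv⟩
  | _ + 1, pa, pb => ⟨a, b, hav, hbv, hab, hba, pa, pb⟩

/-- The third alternative carries the induction through the case where `q` is a proper ancestor
of `a`. -/
theorem split (hr : Relator.RightUnique r) (q : V) {S : Set V} :
    ∀ {k : ℕ} {v : V}, FibPattern r (k + 1) S v →
      FibPattern r (k + 1) {x ∈ S | ReflTransGen r x q} q ∨
      FibPattern r k {x ∈ S | ¬ ReflTransGen r x q} v ∨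
      (FibPattern r k {x ∈ S | ReflTransGen r x q} q ∧
        FibPattern r (k - 1) {x ∈ S | ¬ ReflTransGen r x q} v)
  | 0, _, ⟨u₁, hu₁, u₂, hu₂, hne, h₁, h₂⟩ => by
      by_cases hq₁ : ReflTransGen r u₁ q
      · by_cases hq₂ : ReflTransGen r u₂ q
        · exact .inl ⟨u₁, ⟨hu₁, hq₁⟩, u₂, ⟨hu₂, hq₂⟩, hne, hq₁, hq₂⟩
        · exact .inr (.inl ⟨u₂, ⟨hu₂, hq₂⟩, h₂⟩)
      · exact .inr (.inl ⟨u₁, ⟨hu₁, hq₁⟩, h₁⟩)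
  | k + 1, _, ⟨a, b, hav, hbv, hab, hba, pa, pb⟩ => by
      have clean : ∀ {j w}, FibPattern r j S w → ¬ ReflTransGen r w q → ¬ ReflTransGen r q w →
          FibPattern r j {x ∈ S | ¬ ReflTransGen r x q} w := fun p hwq hqw =>
        p.mono fun u hu huw => ⟨hu, not_reflTransGen_of_incomparable hr hwq hqw huw⟩
      by_cases haq : ReflTransGen r a q
      · by_cases hbq : ReflTransGen r b q
        · exact .inl (FibPattern.restrict ⟨a, b, haq, hbq, hab, hba, pa, pb⟩)
        · have pb' := clean pb hbq fun hqb => hab (haq.trans hqb)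
          exact .inr (.inr ⟨(pa.trans haq).restrict, pb'.trans hbv⟩)
      · by_cases hqa : ReflTransGen r q a
        · have pb' := clean pb (fun hbq => hba (hbq.trans hqa))
            fun hqb => (hqa.total_of_right_unique hr hqb).elim hab hba
          rcases split hr q pa with h | h | ⟨-, h⟩
          · exact .inr (.inr ⟨h, pb'.trans hbv⟩)
          · exact .inr (.inl (succ_of_incomparable hr h (pb'.of_le (k.sub_le 1)) hab hba hav hbv))
          · exact .inr (.inl (succ_of_incomparable hr pb' h hba hab hbv hav))
        · exact .inr (.inl ((clean pa haq hqa).trans hav))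

theorem le_height (hr : Relator.RightUnique r) {s : Strategy V} :
    ∀ {S : Set V}, (∀ f ∈ S, s.run (ReflTransGen r) f = f) →
      ∀ {k : ℕ} {v : V}, FibPattern r k S v → k ≤ s.height := by
  induction s with
  | leaf w =>
      rintro S hs (_ | k) v h
      · exact le_rfl
      · obtain ⟨u₁, hu₁, u₂, hu₂, hne⟩ := h.exists_ne
        exact absurd ((hs u₁ hu₁).symm.trans (hs u₂ hu₂)) hne
  | node q yes no ihYes ihNo =>
      rintro S hs (_ | k) v h
      · exact Nat.zero_le _
      have hsYes : ∀ f ∈ {x ∈ S | ReflTransGen r x q}, yes.run (ReflTransGen r) f = f :=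
        fun f hf => by simpa [Strategy.run, hf.2] using hs f hf.1
      have hsNo : ∀ f ∈ {x ∈ S | ¬ ReflTransGen r x q}, no.run (ReflTransGen r) f = f :=
        fun f hf => by simpa [Strategy.run, hf.2] using hs f hf.1
      simp only [Strategy.height]
      rcases split hr q h with h | h | ⟨h, -⟩
      · have := ihYes hsYes h; omega
      · have := ihNo hsNo h; omega
      · have := ihYes hsYes h; omega

end FibPattern

end Pattern

lemma not_edgeOf_sinkOf : ∀ (t : ITree) (w : Pos t), ¬ edgeOf t (sinkOf t) w
  | .leaf, _ => id
  | .node1 _, .inl _ => id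
  | .node1 _, .inr _ => id
  | .node2 _ _, .inl _ => id
  | .node2 _ _, .inr _ => id

lemma edgeOf_rightUnique : ∀ t : ITree, Relator.RightUnique (edgeOf t)
  | .leaf => fun _ _ _ h => h.elim
  | .node1 t => by
      rintro (a | _) (b | _) (c | _) h₁ h₂ <;> simp only [edgeOf] at h₁ h₂
      · rw [edgeOf_rightUnique t h₁ h₂]
      · exact (not_edgeOf_sinkOf t b (h₂ ▸ h₁)).elim
      · exact (not_edgeOf_sinkOf t c (h₁ ▸ h₂)).elim
      · rfl
  | .node2 t s => by
      rintro ((a | a) | _) ((b | b) | _) ((c | c) | _) h₁ h₂ <;> simp only [edgeOf] at h₁ h₂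
      · rw [edgeOf_rightUnique t h₁ h₂]
      · exact (not_edgeOf_sinkOf t b (h₂ ▸ h₁)).elim
      · exact (not_edgeOf_sinkOf t c (h₁ ▸ h₂)).elim
      · rfl
      · rw [edgeOf_rightUnique s h₁ h₂]
      · exact (not_edgeOf_sinkOf s b (h₂ ▸ h₁)).elim
      · exact (not_edgeOf_sinkOf s c (h₁ ▸ h₂)).elim
      · rfl

lemma eq_sinkOf_of_reflTransGen {t : ITree} {w : Pos t} (h : ReflTransGen (edgeOf t) (sinkOf t) w) :
    w = sinkOf t := by
  rcases h.cases_head with h | ⟨c, e, -⟩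
  · exact h.symm
  · exact (not_edgeOf_sinkOf t c e).elim

section Node2

variable {t s : ITree}

def Pos.left (u : Pos t) : Pos (.node2 t s) := .inl (.inl u)

def Pos.right (u : Pos s) : Pos (.node2 t s) := .inl (.inr u)

lemma Pos.left_injective : Function.Injective (Pos.left : Pos t → Pos (.node2 t s)) :=
  fun _ _ h => Sum.inl_injective (Sum.inl_injective h)

lemma Pos.right_injective : Function.Injective (Pos.right : Pos s → Pos (.node2 t s)) :=
  fun _ _ h => Sum.inr_injective (Sum.inl_injective h)

lemma reflTransGen_sinkOf : ∀ (t : ITree) (x : Pos t), ReflTransGen (edgeOf t) x (sinkOf t)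
  | .leaf, _ => .refl
  | .node1 t, .inl a =>
      ((reflTransGen_sinkOf t a).lift (Sum.inl : Pos t → Pos (.node1 t)) fun _ _ h => h).tail rfl
  | .node1 _, .inr _ => .refl
  | .node2 t _, .inl (.inl a) =>
      ((reflTransGen_sinkOf t a).lift Pos.left fun _ _ h => h).tail rfl
  | .node2 _ s, .inl (.inr b) =>
      ((reflTransGen_sinkOf s b).lift Pos.right fun _ _ h => h).tail rfl
  | .node2 _ _, .inr _ => .refl

lemma reflTransGen_left_iff {u : Pos t} {y : Pos (.node2 t s)} :
    ReflTransGen (edgeOf (.node2 t s)) (Pos.left u) y ↔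
      (∃ v, y = Pos.left v ∧ ReflTransGen (edgeOf t) u v) ∨ y = sinkOf (.node2 t s) := by
  refine ⟨fun h => ?_, ?_⟩
  · induction h with
    | refl => exact .inl ⟨u, rfl, .refl⟩
    | @tail y z _ e ih =>
        rcases ih with ⟨v, rfl, huv⟩ | rfl
        · rcases z with (w | w) | ⟨⟩
          · exact .inl ⟨w, rfl, huv.tail e⟩
          · exact e.elim
          · exact .inr rfl
        · exact (not_edgeOf_sinkOf _ z e).elim
  · rintro (⟨v, rfl, huv⟩ | rfl)
    · exact huv.lift Pos.left fun _ _ h => h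
    · exact reflTransGen_sinkOf _ _

lemma reflTransGen_right_iff {u : Pos s} {y : Pos (.node2 t s)} :
    ReflTransGen (edgeOf (.node2 t s)) (Pos.right u) y ↔
      (∃ v, y = Pos.right v ∧ ReflTransGen (edgeOf s) u v) ∨ y = sinkOf (.node2 t s) := by
  refine ⟨fun h => ?_, ?_⟩
  · induction h with
    | refl => exact .inl ⟨u, rfl, .refl⟩
    | @tail y z _ e ih =>
        rcases ih with ⟨v, rfl, huv⟩ | rfl
        · rcases z with (w | w) | ⟨⟩
          · exact e.elim
          · exact .inl ⟨w, rfl, huv.tail e⟩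
          · exact .inr rfl
        · exact (not_edgeOf_sinkOf _ z e).elim
  · rintro (⟨v, rfl, huv⟩ | rfl)
    · exact huv.lift Pos.right fun _ _ h => h
    · exact reflTransGen_sinkOf _ _

lemma reflTransGen_left_left {u v : Pos t} :
    ReflTransGen (edgeOf (.node2 t s)) (Pos.left u) (Pos.left v) ↔
      ReflTransGen (edgeOf t) u v := by
  refine reflTransGen_left_iff.trans ⟨?_, fun h => .inl ⟨v, rfl, h⟩⟩
  rintro (⟨w, hw, huw⟩ | h)
  · rwa [Pos.left_injective hw]
  · cases h

lemma reflTransGen_right_right {u v : Pos s} :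
    ReflTransGen (edgeOf (.node2 t s)) (Pos.right u) (Pos.right v) ↔
      ReflTransGen (edgeOf s) u v := by
  refine reflTransGen_right_iff.trans ⟨?_, fun h => .inl ⟨v, rfl, h⟩⟩
  rintro (⟨w, hw, huw⟩ | h)
  · rwa [Pos.right_injective hw]
  · cases h

lemma not_reflTransGen_left_right {u : Pos t} {v : Pos s} :
    ¬ ReflTransGen (edgeOf (.node2 t s)) (Pos.left u) (Pos.right v) := by
  rw [reflTransGen_left_iff]
  rintro (⟨w, h, -⟩ | h) <;> cases h

lemma not_reflTransGen_right_left {u : Pos s} {v : Pos t} :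
    ¬ ReflTransGen (edgeOf (.node2 t s)) (Pos.right u) (Pos.left v) := by
  rw [reflTransGen_right_iff]
  rintro (⟨w, h, -⟩ | h) <;> cases h

lemma exists_strategy_node2 {sL : Strategy (Pos t)} {sR : Strategy (Pos s)}
    (hL : ∀ f, sL.run (ReflTransGen (edgeOf t)) f = f)
    (hR : ∀ f, sR.run (ReflTransGen (edgeOf s)) f = f) :
    ∃ st : Strategy (Pos (.node2 t s)), (∀ f, st.run (ReflTransGen (edgeOf (.node2 t s))) f = f) ∧
      st.height = 1 + max sL.height (1 + sR.height) := by
  refine ⟨.node (Pos.left (sinkOf t)) (sL.map Pos.left)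
    (.node (Pos.right (sinkOf s)) (sR.map Pos.right) (.leaf (sinkOf _))), ?_, ?_⟩
  · have not_sinkOf : ∀ {x}, ¬ ReflTransGen (edgeOf (.node2 t s)) (sinkOf _) (Sum.inl x) :=
      fun h => by cases eq_sinkOf_of_reflTransGen h
    rintro ((a | b) | ⟨⟩)
    · change Strategy.run _ _ (Pos.left a) = Pos.left a
      rw [Strategy.run, if_pos (reflTransGen_left_left.2 (reflTransGen_sinkOf t a)),
        Strategy.run_map _ fun _ _ => reflTransGen_left_left, hL]
    · change Strategy.run _ _ (Pos.right b) = Pos.right b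
      rw [Strategy.run, if_neg not_reflTransGen_right_left, Strategy.run,
        if_pos (reflTransGen_right_right.2 (reflTransGen_sinkOf s b)),
        Strategy.run_map _ fun _ _ => reflTransGen_right_right, hR]
    · exact (if_neg not_sinkOf).trans (if_neg not_sinkOf)
  · simp [Strategy.height]

lemma fibPattern_node2 {k : ℕ}
    (pa : FibPattern (edgeOf t) (k + 1) Set.univ (sinkOf t))
    (pb : FibPattern (edgeOf s) k Set.univ (sinkOf s)) :
    FibPattern (edgeOf (.node2 t s)) (k + 2) Set.univ (sinkOf (.node2 t s)) :=
  ⟨Pos.left (sinkOf t), Pos.right (sinkOf s), reflTransGen_sinkOf _ _, reflTransGen_sinkOf _ _,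
    not_reflTransGen_left_right, not_reflTransGen_right_left,
    pa.map Pos.left Pos.left_injective (fun _ _ => reflTransGen_left_left) (Set.mapsTo_univ _ _),
    pb.map Pos.right Pos.right_injective (fun _ _ => reflTransGen_right_right)
      (Set.mapsTo_univ _ _)⟩

end Node2

lemma exists_strategy_fibTree : ∀ n : ℕ, ∃ st : Strategy (Pos (FibTree n)),
    (∀ f, st.run (ReflTransGen (edgeOf (FibTree n))) f = f) ∧ st.height ≤ n - 1
  | 0 | 1 => ⟨.leaf .unit, fun _ => rfl, le_rfl⟩
  | 2 => by
      refine ⟨.node (.inl .unit) (.leaf (.inl .unit)) (.leaf (.inr .unit)), ?_, le_rfl⟩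
      rintro (⟨⟩ | ⟨⟩)
      · exact if_pos .refl
      · exact if_neg fun h => by cases eq_sinkOf_of_reflTransGen h
  | n + 3 => by
      obtain ⟨sL, hL, hLh⟩ := exists_strategy_fibTree (n + 2)
      obtain ⟨sR, hR, hRh⟩ := exists_strategy_fibTree (n + 1)
      obtain ⟨st, hst, hh⟩ := exists_strategy_node2 hL hR
      exact ⟨st, hst, hh.trans_le (by omega)⟩

lemma fibPattern_fibTree : ∀ n : ℕ,
    FibPattern (edgeOf (FibTree n)) (n - 1) Set.univ (sinkOf (FibTree n))
  | 0 | 1 => ⟨.unit, trivial, .refl⟩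
  | 2 => ⟨.inl .unit, trivial, .inr .unit, trivial, Sum.inl_ne_inr, .single rfl, .refl⟩
  | n + 3 => fibPattern_node2 (fibPattern_fibTree (n + 2)) (fibPattern_fibTree (n + 1))

theorem fibtree_optimal_general (i : ℕ) :
    (∃ s : Strategy (Pos (FibTree i)),
      (∀ f, s.run (fun u v => Relation.ReflTransGen (edgeOf (FibTree i)) u v) f = f) ∧
      s.height ≤ i - 1) ∧
    (∀ s : Strategy (Pos (FibTree i)),
      (∀ f, s.run (fun u v => Relation.ReflTransGen (edgeOf (FibTree i)) u v) f = f) →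
      i - 1 ≤ s.height) :=
  ⟨exists_strategy_fibTree i, fun _ hs =>
    (fibPattern_fibTree i).le_height (edgeOf_rightUnique _) fun f _ => hs f⟩

/-- For every `i ≥ 1`, the optimal worst-case number of queries for the Regression
Search Problem on the `i`-th Fibonacci tree `F_i` is exactly `i - 1`: some correct
strategy uses at most `i - 1` queries, and every correct strategy uses at least
`i - 1` queries in the worst case. -/
theorem fibtree_optimal (i : ℕ) (hi : 1 ≤ i) :
    (∃ s : Strategy (Pos (FibTree i)),
      (∀ f, s.run (fun u v => Relation.ReflTransGen (edgeOf (FibTree i)) u v) f = f) ∧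
      s.height ≤ i - 1) ∧
    (∀ s : Strategy (Pos (FibTree i)),
      (∀ f, s.run (fun u v => Relation.ReflTransGen (edgeOf (FibTree i)) u v) f = f) →
      i - 1 ≤ s.height) :=
  fibtree_optimal_general i
end

section
/- If T is an in-tree (all arcs directed towards a root sink) containing two vertex-disjoint subtrees isomorphic to the Fibonacci trees F_k and F_{k+1} whose sinks are not ancestors of each other, then every correct strategy for the Regression Search Problem on T requires at least k + 1 queries in the worst case. -/
/-! Adversary argument. Say that a set of vertices has rank `n + 1` if it contains disjoint
embedded copies of `F_{n+1}` and `F_{n+2}` with incomparable sinks, and rank `0` if it has two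
points; a strategy correct on a set of rank `n` needs more than `n` queries, provided every query
leaves a set of one rank lower inside one of its two answer classes. For a pair `(F_i, F_{i+1})`
with `i ≥ 2` and a query `q`: if the sink of `F_{i+1}` is an ancestor of `q`, or no vertex of
`F_{i+1}` is, the pair `(F_{i-1}, F_i)` inside `F_{i+1}` stays in one class. Otherwise `q` lies in
one branch of `F_{i+1}`, and the other branch together with `F_i` (or the copy of `F_{i-1}` inside
it) answers "not an ancestor". For `i = 1` two of the three vertices answer alike. -/

open Relation

theorem Set.nontrivial_inter_or_nontrivial_inter_compl {V : Type} {S : Set V} {x y z : V}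
    (hx : x ∈ S) (hy : y ∈ S) (hz : z ∈ S) (hxy : x ≠ y) (hxz : x ≠ z) (hyz : y ≠ z)
    (A : Set V) : (S ∩ A).Nontrivial ∨ (S ∩ Aᶜ).Nontrivial := by
  have of_agree : ∀ {a b : V}, a ∈ S → b ∈ S → a ≠ b → (a ∈ A ↔ b ∈ A) →
      (S ∩ A).Nontrivial ∨ (S ∩ Aᶜ).Nontrivial := fun {a b} ha hb hab hiff => by
    by_cases haA : a ∈ A
    · exact .inl ⟨_, ⟨ha, haA⟩, _, ⟨hb, hiff.1 haA⟩, hab⟩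
    · exact .inr ⟨_, ⟨ha, haA⟩, _, ⟨hb, mt hiff.2 haA⟩, hab⟩
  have : (x ∈ A ↔ y ∈ A) ∨ (x ∈ A ↔ z ∈ A) ∨ (y ∈ A ↔ z ∈ A) := by tauto
  rcases this with h | h | h
  · exact of_agree hx hy hxy h
  · exact of_agree hx hz hxz h
  · exact of_agree hy hz hyz h

theorem Strategy.lt_height_of_split {V : Type} (anc : V → V → Prop) (hard : ℕ → Set V → Prop)
    (nontrivial : ∀ n S, hard n S → S.Nontrivial)
    (split : ∀ n S q, hard (n + 1) S →
      hard n (S ∩ {x | anc x q}) ∨ hard n (S ∩ {x | anc x q}ᶜ))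
    (s : Strategy V) {n : ℕ} {S : Set V} (hS : hard n S) (hs : ∀ x ∈ S, s.run anc x = x) :
    n < s.height := by
  induction s generalizing n S with
  | leaf v =>
    obtain ⟨x, hx, y, hy, hxy⟩ := nontrivial n S hS
    exact absurd ((hs x hx).symm.trans (hs y hy)) hxy
  | node q l r ihl ihr =>
    cases n with
    | zero => simp only [height]; omega
    | succ n =>
      have hl : n < l.height → n + 1 < (node q l r).height := by simp only [height]; omega
      have hr : n < r.height → n + 1 < (node q l r).height := by simp only [height]; omega
      rcases split n S q hS with h | h
      · refine hl (ihl h fun x hx => ?_)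
        simpa only [run, if_pos (show anc x q from hx.2)] using hs x hx.1
      · refine hr (ihr h fun x hx => ?_)
        simpa only [run, if_neg (show ¬ anc x q from hx.2)] using hs x hx.1

section Forest

variable {V : Type} {E : V → V → Prop}

theorem reflTransGen_of_rel_of_ne (hfun : Relator.RightUnique E)
    {x y z : V} (hxy : ReflTransGen E x y) (hne : x ≠ y) (hxz : E x z) : ReflTransGen E z y := by
  obtain rfl | ⟨w, hxw, hwy⟩ := hxy.cases_head
  · exact absurd rfl hne
  · rwa [hfun hxz hxw]

theorem incompRel_of_rel_of_ne (hfun : Relator.RightUnique E)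
    {a b x : V} (hab : IncompRel (ReflTransGen E) a b) (hxa : E x a) (hxb : x ≠ b) :
    IncompRel (ReflTransGen E) x b :=
  ⟨fun h => hab.1 (reflTransGen_of_rel_of_ne hfun h hxb hxa),
    fun h => hab.2 (h.tail hxa)⟩

theorem incompRel_of_rel_of_rel (hacyc : ∀ v, ¬ TransGen E v v)
    (hfun : Relator.RightUnique E)
    {x y z : V} (hxz : E x z) (hyz : E y z) (hxy : x ≠ y) : IncompRel (ReflTransGen E) x y :=
  ⟨fun h => hacyc z (.tail' (reflTransGen_of_rel_of_ne hfun h hxy hxz) hyz),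
    fun h => hacyc z (.tail' (reflTransGen_of_rel_of_ne hfun h hxy.symm hyz) hxz)⟩

end Forest

theorem reflTransGen_edgeOf_sinkOf : ∀ (t : ITree) (p : Pos t),
    ReflTransGen (edgeOf t) p (sinkOf t)
  | .leaf, _ => .refl
  | .node1 t, .inl a =>
    (ReflTransGen.lift (p := edgeOf (.node1 t)) Sum.inl (fun _ _ h => h) _ _
      (reflTransGen_edgeOf_sinkOf t a)).tail
      (show edgeOf (.node1 t) (.inl (sinkOf t)) (.inr ()) from rfl)
  | .node1 _, .inr _ => .refl
  | .node2 t s, .inl (.inl a) =>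
    (ReflTransGen.lift (p := edgeOf (.node2 t s)) (Sum.inl ∘ Sum.inl) (fun _ _ h => h) _ _
      (reflTransGen_edgeOf_sinkOf t a)).tail
      (show edgeOf (.node2 t s) (.inl (.inl (sinkOf t))) (.inr ()) from rfl)
  | .node2 t s, .inl (.inr a) =>
    (ReflTransGen.lift (p := edgeOf (.node2 t s)) (Sum.inl ∘ Sum.inr) (fun _ _ h => h) _ _
      (reflTransGen_edgeOf_sinkOf s a)).tail
      (show edgeOf (.node2 t s) (.inl (.inr (sinkOf s))) (.inr ()) from rfl)
  | .node2 _ _, .inr _ => .refl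

theorem exists_edgeOf_of_ne_sinkOf : ∀ (t : ITree) (p : Pos t), p ≠ sinkOf t →
    ∃ p', edgeOf t p p'
  | .leaf, _, hp => absurd rfl hp
  | .node1 t, .inl a, _ => by
    by_cases ha : a = sinkOf t
    · exact ⟨.inr (), ha⟩
    · obtain ⟨a', ha'⟩ := exists_edgeOf_of_ne_sinkOf t a ha
      exact ⟨.inl a', ha'⟩
  | .node1 _, .inr _, hp => absurd rfl hp
  | .node2 t _, .inl (.inl a), _ => by
    by_cases ha : a = sinkOf t
    · exact ⟨.inr (), ha⟩
    · obtain ⟨a', ha'⟩ := exists_edgeOf_of_ne_sinkOf t a ha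
      exact ⟨.inl (.inl a'), ha'⟩
  | .node2 _ s, .inl (.inr a), _ => by
    by_cases ha : a = sinkOf s
    · exact ⟨.inr (), ha⟩
    · obtain ⟨a', ha'⟩ := exists_edgeOf_of_ne_sinkOf s a ha
      exact ⟨.inl (.inr a'), ha'⟩
  | .node2 _ _, .inr _, hp => absurd rfl hp

structure IsTreeEmbedding {V : Type} (E : V → V → Prop) (t : ITree) (h : Pos t → V) : Prop where
  injective : Function.Injective h
  map_edgeOf : ∀ a b, edgeOf t a b → E (h a) (h b)

namespace IsTreeEmbedding

variable {V : Type} {E : V → V → Prop}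

theorem reflTransGen_sinkOf {t : ITree} {h : Pos t → V} (hh : IsTreeEmbedding E t h)
    (p : Pos t) : ReflTransGen E (h p) (h (sinkOf t)) :=
  ReflTransGen.lift h hh.map_edgeOf _ _ (reflTransGen_edgeOf_sinkOf t p)

theorem mem_range_or_reflTransGen_sinkOf (hfun : Relator.RightUnique E)
    {t : ITree} {h : Pos t → V} (hh : IsTreeEmbedding E t h) {p : Pos t} {q : V}
    (hpq : ReflTransGen E (h p) q) : q ∈ Set.range h ∨ ReflTransGen E (h (sinkOf t)) q := by
  generalize hv : h p = v at hpq
  induction hpq using ReflTransGen.head_induction_on generalizing p with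
  | refl => exact .inl ⟨p, hv⟩
  | head hvw hwq ih =>
    subst hv
    by_cases hp : p = sinkOf t
    · exact .inr (hp ▸ .head hvw hwq)
    · obtain ⟨p', hpp'⟩ := exists_edgeOf_of_ne_sinkOf t p hp
      exact ih (hfun (hh.map_edgeOf _ _ hpp') hvw)

theorem not_reflTransGen (hfun : Relator.RightUnique E)
    {t : ITree} {h : Pos t → V} (hh : IsTreeEmbedding E t h) {q : V} (hq : q ∉ Set.range h)
    (hsink : ¬ ReflTransGen E (h (sinkOf t)) q) (p : Pos t) : ¬ ReflTransGen E (h p) q :=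
  fun hpq => (hh.mem_range_or_reflTransGen_sinkOf hfun hpq).elim hq hsink

variable {t s : ITree} {h : Pos (.node2 t s) → V}

theorem node2_left (hh : IsTreeEmbedding E (.node2 t s) h) :
    IsTreeEmbedding E t (fun a => h (.inl (.inl a))) :=
  ⟨fun _ _ hab => Sum.inl_injective (Sum.inl_injective (hh.injective hab)),
    fun a b => hh.map_edgeOf (.inl (.inl a)) (.inl (.inl b))⟩

theorem node2_right (hh : IsTreeEmbedding E (.node2 t s) h) :
    IsTreeEmbedding E s (fun a => h (.inl (.inr a))) :=
  ⟨fun _ _ hab => Sum.inr_injective (Sum.inl_injective (hh.injective hab)),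
    fun a b => hh.map_edgeOf (.inl (.inr a)) (.inl (.inr b))⟩

theorem exists_fibTree_pred {m : ℕ} {h : Pos (FibTree (m + 2)) → V}
    (hh : IsTreeEmbedding E (FibTree (m + 2)) h) :
    ∃ h' : Pos (FibTree (m + 1)) → V, IsTreeEmbedding E (FibTree (m + 1)) h' ∧
      Set.range h' ⊆ Set.range h ∧ E (h' (sinkOf _)) (h (sinkOf _)) := by
  cases m with
  | zero =>
    exact ⟨fun _ => h (.inl ()), ⟨fun _ _ _ => rfl, fun _ _ hab => hab.elim⟩,
      Set.range_subset_iff.2 fun _ => ⟨_, rfl⟩, hh.map_edgeOf _ _ rfl⟩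
  | succ m =>
    exact ⟨_, hh.node2_left, Set.range_subset_iff.2 fun _ => ⟨_, rfl⟩, hh.map_edgeOf _ _ rfl⟩

end IsTreeEmbedding

structure FibPair {V : Type} (E : V → V → Prop) (i : ℕ) where
  f : Pos (FibTree i) → V
  g : Pos (FibTree (i + 1)) → V
  isTreeEmbedding_f : IsTreeEmbedding E (FibTree i) f
  isTreeEmbedding_g : IsTreeEmbedding E (FibTree (i + 1)) g
  disjoint : ∀ a b, f a ≠ g b
  incompRel_sinkOf : IncompRel (ReflTransGen E) (f (sinkOf _)) (g (sinkOf _))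

namespace FibPair

variable {V : Type} {E : V → V → Prop}

def support {i : ℕ} (P : FibPair E i) : Set V := Set.range P.f ∪ Set.range P.g

theorem exists_of_isTreeEmbedding (hacyc : ∀ v, ¬ TransGen E v v)
    (hfun : Relator.RightUnique E) {n : ℕ} {g : Pos (FibTree (n + 3)) → V}
    (hg : IsTreeEmbedding E (FibTree (n + 3)) g) :
    ∃ P : FibPair E (n + 1), P.support ⊆ Set.range g := by
  have hne : g (.inl (.inr (sinkOf (FibTree (n + 1))))) ≠ g (.inl (.inl (sinkOf _))) :=
    hg.injective.ne fun h => Sum.inr_ne_inl (Sum.inl_injective h)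
  refine ⟨⟨_, _, hg.node2_right, hg.node2_left, fun a b h => ?_,
    incompRel_of_rel_of_rel hacyc hfun (hg.map_edgeOf _ (sinkOf _) rfl)
      (hg.map_edgeOf _ (sinkOf _) rfl) hne⟩,
    Set.union_subset ?_ ?_⟩
  · exact Sum.inr_ne_inl (Sum.inl_injective (hg.injective h))
  all_goals exact Set.range_subset_iff.2 fun _ => ⟨_, rfl⟩

theorem not_reflTransGen_f_g (hfun : Relator.RightUnique E) {i : ℕ}
    (P : FibPair E i) (p : Pos (FibTree i)) (q : Pos (FibTree (i + 1))) :
    ¬ ReflTransGen E (P.f p) (P.g q) :=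
  P.isTreeEmbedding_f.not_reflTransGen hfun (fun ⟨p', hp'⟩ => P.disjoint p' q hp')
    (fun h => P.incompRel_sinkOf.1 (h.trans (P.isTreeEmbedding_g.reflTransGen_sinkOf q))) p

variable (hfun : Relator.RightUnique E) {n : ℕ} (P : FibPair E (n + 2))
include hfun

/-- A query inside the `F_{n+2}` branch of `g` sees neither its `F_{n+1}` branch nor `f`. -/
theorem exists_not_reflTransGen_of_left {p₀ : Pos (FibTree (n + 2))}
    (hq : ¬ ReflTransGen E (P.g (sinkOf _)) (P.g (.inl (.inl p₀)))) :
    ∃ P' : FibPair E (n + 1), P'.support ⊆ P.support ∧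
      P'.support ⊆ {x | ReflTransGen E x (P.g (.inl (.inl p₀)))}ᶜ := by
  have hg := P.isTreeEmbedding_g
  have hne : ∀ {p}, P.g (.inl (.inr p)) ≠ P.g (.inl (.inl p₀)) :=
    hg.injective.ne fun h => Sum.inr_ne_inl (Sum.inl_injective h)
  have hright := hg.node2_right.not_reflTransGen hfun (fun ⟨_, hp⟩ => hne hp)
    (fun h => hq (reflTransGen_of_rel_of_ne hfun h hne (hg.map_edgeOf _ (sinkOf _) rfl)))
  refine ⟨⟨_, P.f, hg.node2_right, P.isTreeEmbedding_f, fun a b h => P.disjoint b _ h.symm,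
    incompRel_of_rel_of_ne hfun P.incompRel_sinkOf.symm (hg.map_edgeOf _ (sinkOf _) rfl)
      (P.disjoint _ _).symm⟩, Set.union_subset ?_ Set.subset_union_left, ?_⟩
  · exact Set.range_subset_iff.2 fun _ => .inr ⟨_, rfl⟩
  · rintro _ (⟨p, rfl⟩ | ⟨p, rfl⟩)
    exacts [hright p, P.not_reflTransGen_f_g hfun p _]

/-- A query inside the `F_{n+1}` branch of `g` sees neither its `F_{n+2}` branch nor a copy of
`F_{n+1}` inside `f`. -/
theorem exists_not_reflTransGen_of_right {p₀ : Pos (FibTree (n + 1))}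
    (hq : ¬ ReflTransGen E (P.g (sinkOf _)) (P.g (.inl (.inr p₀)))) :
    ∃ P' : FibPair E (n + 1), P'.support ⊆ P.support ∧
      P'.support ⊆ {x | ReflTransGen E x (P.g (.inl (.inr p₀)))}ᶜ := by
  have hg := P.isTreeEmbedding_g
  obtain ⟨f', hf', hf'f, hf'E⟩ := P.isTreeEmbedding_f.exists_fibTree_pred
  have hf'g : ∀ a b, f' a ≠ P.g b := fun a b => by
    obtain ⟨c, hc⟩ := hf'f ⟨a, rfl⟩
    exact hc ▸ P.disjoint c b
  have hne : ∀ {p}, P.g (.inl (.inl p)) ≠ P.g (.inl (.inr p₀)) :=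
    hg.injective.ne fun h => Sum.inl_ne_inr (Sum.inl_injective h)
  have hleft := hg.node2_left.not_reflTransGen hfun (fun ⟨_, hp⟩ => hne hp)
    (fun h => hq (reflTransGen_of_rel_of_ne hfun h hne
      (hg.map_edgeOf (.inl (.inl (sinkOf _))) (sinkOf _) rfl)))
  have hincomp := incompRel_of_rel_of_ne hfun P.incompRel_sinkOf hf'E (hf'g _ _)
  refine ⟨⟨f', _, hf', hg.node2_left, fun a _ => hf'g a _,
    (incompRel_of_rel_of_ne hfun hincomp.symm
      (hg.map_edgeOf (.inl (.inl (sinkOf _))) (sinkOf _) rfl) (hf'g _ _).symm).symm⟩,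
    Set.union_subset (hf'f.trans Set.subset_union_left) ?_, ?_⟩
  · exact Set.range_subset_iff.2 fun _ => .inr ⟨_, rfl⟩
  · rintro _ (⟨p, rfl⟩ | ⟨p, rfl⟩)
    · obtain ⟨c, hc⟩ := hf'f ⟨p, rfl⟩
      exact (hc ▸ P.not_reflTransGen_f_g hfun c _ :)
    · exact hleft p

theorem exists_subset_or_subset_compl (hacyc : ∀ v, ¬ TransGen E v v) (q : V) :
    ∃ P' : FibPair E (n + 1), P'.support ⊆ P.support ∧
      (P'.support ⊆ {x | ReflTransGen E x q} ∨ P'.support ⊆ {x | ReflTransGen E x q}ᶜ) := by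
  have hg := P.isTreeEmbedding_g
  obtain ⟨P₀, hP₀⟩ := exists_of_isTreeEmbedding hacyc hfun hg
  have hsub : P₀.support ⊆ P.support := hP₀.trans Set.subset_union_right
  by_cases hsink : ReflTransGen E (P.g (sinkOf _)) q
  · refine ⟨P₀, hsub, .inl fun x hx => ?_⟩
    obtain ⟨p, rfl⟩ := hP₀ hx
    exact (hg.reflTransGen_sinkOf p).trans hsink
  by_cases hclean : ∀ p, ¬ ReflTransGen E (P.g p) q
  · refine ⟨P₀, hsub, .inr fun x hx => ?_⟩
    obtain ⟨p, rfl⟩ := hP₀ hx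
    exact hclean p
  obtain ⟨p, hp⟩ := not_forall_not.1 hclean
  obtain ⟨(p₀ | p₀) | _, rfl⟩ := (hg.mem_range_or_reflTransGen_sinkOf hfun hp).resolve_right hsink
  · obtain ⟨P', hsub', hside⟩ := P.exists_not_reflTransGen_of_left hfun hsink
    exact ⟨P', hsub', .inr hside⟩
  · obtain ⟨P', hsub', hside⟩ := P.exists_not_reflTransGen_of_right hfun hsink
    exact ⟨P', hsub', .inr hside⟩
  · exact absurd .refl hsink

end FibPair

def IsFibHard {V : Type} (E : V → V → Prop) : ℕ → Set V → Prop
  | 0, S => S.Nontrivial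
  | n + 1, S => ∃ P : FibPair E (n + 1), P.support ⊆ S

namespace IsFibHard

variable {V : Type} {E : V → V → Prop}

theorem nontrivial : ∀ {n : ℕ} {S : Set V}, IsFibHard E n S → S.Nontrivial
  | 0, _, h => h
  | _ + 1, _, ⟨P, hP⟩ =>
    ⟨_, hP (.inl ⟨sinkOf _, rfl⟩), _, hP (.inr ⟨sinkOf _, rfl⟩), P.disjoint _ _⟩

theorem split (hacyc : ∀ v, ¬ TransGen E v v) (hfun : Relator.RightUnique E) :
    ∀ {n : ℕ} {S : Set V} (q : V), IsFibHard E (n + 1) S →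
      IsFibHard E n (S ∩ {x | ReflTransGen E x q}) ∨
        IsFibHard E n (S ∩ {x | ReflTransGen E x q}ᶜ)
  | 0, _, _, ⟨P, hP⟩ =>
    Set.nontrivial_inter_or_nontrivial_inter_compl (hP (.inl ⟨(), rfl⟩))
      (hP (.inr ⟨.inl (), rfl⟩)) (hP (.inr ⟨.inr (), rfl⟩)) (P.disjoint _ _) (P.disjoint _ _)
      (P.isTreeEmbedding_g.injective.ne Sum.inl_ne_inr) _
  | _ + 1, _, q, ⟨P, hP⟩ => by
    obtain ⟨P', hsub, hside | hside⟩ := P.exists_subset_or_subset_compl hfun hacyc q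
    exacts [.inl ⟨P', Set.subset_inter (hsub.trans hP) hside⟩,
      .inr ⟨P', Set.subset_inter (hsub.trans hP) hside⟩]

end IsFibHard

theorem fibtree_lower_bound_general (k : ℕ) (hk : 1 ≤ k)
    {V : Type} [Fintype V] (E : V → V → Prop)
    (hacyc : ∀ v : V, ¬ Relation.TransGen E v v)
    (htree : ∀ v : V, {w | E v w}.ncard ≤ 1)
    (f : Pos (FibTree k) → V) (g : Pos (FibTree (k + 1)) → V)
    (hfinj : Function.Injective f) (hginj : Function.Injective g)
    (hfE : ∀ a b, edgeOf (FibTree k) a b ↔ E (f a) (f b))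
    (hgE : ∀ a b, edgeOf (FibTree (k + 1)) a b ↔ E (g a) (g b))
    (hdisj : ∀ a b, f a ≠ g b)
    (hs1 : ¬ Relation.ReflTransGen E (f (sinkOf (FibTree k))) (g (sinkOf (FibTree (k + 1)))))
    (hs2 : ¬ Relation.ReflTransGen E (g (sinkOf (FibTree (k + 1)))) (f (sinkOf (FibTree k)))) :
    ∀ s : Strategy V,
      (∀ x : V, s.run (fun u v => Relation.ReflTransGen E u v) x = x) →
      k + 1 ≤ s.height := by
  intro s hs
  have hfun : Relator.RightUnique E := fun v w w' hw hw' =>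
    (Set.ncard_le_one (Set.toFinite _)).1 (htree v) w hw w' hw'
  obtain ⟨n, rfl⟩ : ∃ n, k = n + 1 := ⟨k - 1, by omega⟩
  let P : FibPair E (n + 1) :=
    ⟨f, g, ⟨hfinj, fun a b => (hfE a b).1⟩, ⟨hginj, fun a b => (hgE a b).1⟩, hdisj, hs1, hs2⟩
  exact s.lt_height_of_split _ (IsFibHard E) (fun _ _ => IsFibHard.nontrivial)
    (fun _ _ q => IsFibHard.split hacyc hfun q) (S := Set.univ) ⟨P, Set.subset_univ _⟩
    fun x _ => hs x

/-- If an in-tree `T` (all arcs towards a root sink, out-degree at most 1) contains two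
vertex-disjoint induced subtrees isomorphic to the Fibonacci trees `F_k` and `F_{k+1}`
whose sinks are not ancestors of each other, then every correct strategy for the
Regression Search Problem on `T` uses at least `k + 1` queries in the worst case. -/
theorem fibtree_lower_bound (k : ℕ) (hk : 1 ≤ k)
    {V : Type} [Fintype V] (E : V → V → Prop)
    (hacyc : ∀ v : V, ¬ Relation.TransGen E v v)
    (root : V) (hroot : ∀ v : V, Relation.ReflTransGen E v root)
    (htree : ∀ v : V, {w | E v w}.ncard ≤ 1)
    (f : Pos (FibTree k) → V) (g : Pos (FibTree (k + 1)) → V)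
    (hfinj : Function.Injective f) (hginj : Function.Injective g)
    (hfE : ∀ a b, edgeOf (FibTree k) a b ↔ E (f a) (f b))
    (hgE : ∀ a b, edgeOf (FibTree (k + 1)) a b ↔ E (g a) (g b))
    (hdisj : ∀ a b, f a ≠ g b)
    (hs1 : ¬ Relation.ReflTransGen E (f (sinkOf (FibTree k))) (g (sinkOf (FibTree (k + 1)))))
    (hs2 : ¬ Relation.ReflTransGen E (g (sinkOf (FibTree (k + 1)))) (f (sinkOf (FibTree k)))) :
    ∀ s : Strategy V,
      (∀ x : V, s.run (fun u v => Relation.ReflTransGen E u v) x = x) →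
      k + 1 ≤ s.height :=
  fibtree_lower_bound_general k hk E hacyc htree f g hfinj hginj hfE hgE hdisj hs1 hs2
end

section
/- For all integers i ≥ 4, ⌈log_φ(fib_{i+2} − 1)⌉ = i + 1, where φ = (1+√5)/2 and fib is the Fibonacci sequence with fib₁ = fib₂ = 1. Consequently, for Fibonacci trees of size n = |F_i| ≥ 7, the optimal number of queries i − 1 equals ⌈log_φ n⌉ − 2. -/
lemma sqrt5_sq : Real.sqrt 5 ^ 2 = 5 := Real.sq_sqrt (by norm_num)

lemma one_lt_phi : 1 < phi := by
  unfold phi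
  nlinarith [sqrt5_sq, Real.sqrt_nonneg 5]

lemma phi_pos : 0 < phi := lt_trans one_pos one_lt_phi

lemma phi_sq : phi ^ 2 = phi + 1 := by
  unfold phi
  nlinarith [sqrt5_sq]

/-- `φ^n ≤ fib (n+2)`. -/
lemma phi_pow_le_fib : ∀ n : ℕ, phi ^ n ≤ (Nat.fib (n + 2) : ℝ) := by
  intro n
  induction n using Nat.strong_induction_on with
  | _ n ih =>
    match n with
    | 0 => simp
    | 1 =>
      have := one_lt_phi
      simp only [pow_one, Nat.fib]
      norm_num
      unfold phi
      nlinarith [sqrt5_sq, Real.sqrt_nonneg 5]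
    | n + 2 =>
      have h1 := ih n (by omega)
      have h2 := ih (n + 1) (by omega)
      have : phi ^ (n + 2) = phi ^ (n + 1) + phi ^ n := by
        have : phi ^ (n + 2) = phi ^ n * phi ^ 2 := by ring
        rw [this, phi_sq]; ring
      rw [this, show n + 2 + 2 = (n + 2) + 2 by rfl, Nat.fib_add_two]
      push_cast
      linarith

/-- `fib (n+2) ≤ φ^(n+1)`. -/
lemma fib_le_phi_pow : ∀ n : ℕ, (Nat.fib (n + 2) : ℝ) ≤ phi ^ (n + 1) := by
  intro n
  induction n using Nat.strong_induction_on with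
  | _ n ih =>
    match n with
    | 0 =>
      simp [Nat.fib]
      linarith [one_lt_phi]
    | 1 =>
      rw [phi_sq]
      simp [Nat.fib]
      linarith [one_lt_phi]
    | n + 2 =>
      have h1 := ih n (by omega)
      have h2 := ih (n + 1) (by omega)
      have hp : phi ^ (n + 3) = phi ^ (n + 2) + phi ^ (n + 1) := by
        have : phi ^ (n + 3) = phi ^ (n + 1) * phi ^ 2 := by ring
        rw [this, phi_sq]; ring
      rw [show n + 2 + 2 = (n + 2) + 2 by rfl, Nat.fib_add_two]
      push_cast
      rw [show n + 2 + 1 = n + 3 by rfl, hp]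
      linarith

/-- For `n ≥ 4`, `φ^n + 1 < fib (n+2)`. -/
lemma phi_pow_add_one_lt_fib : ∀ n : ℕ, 4 ≤ n → phi ^ n + 1 < (Nat.fib (n + 2) : ℝ) := by
  intro n hn
  induction n, hn using Nat.le_induction with
  | base =>
    have h4 : phi ^ 4 = 3 * phi + 2 := by
      have : phi ^ 4 = (phi ^ 2) ^ 2 := by ring
      rw [this, phi_sq]
      nlinarith [phi_sq]
    rw [h4]
    norm_num [Nat.fib]
    unfold phi
    nlinarith [sqrt5_sq, Real.sqrt_nonneg 5]
  | succ n hn ih =>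
    have h1 : phi ^ (n - 1) ≤ (Nat.fib (n + 1) : ℝ) := by
      have := phi_pow_le_fib (n - 1)
      rwa [show n - 1 + 2 = n + 1 by omega] at this
    have hp : phi ^ (n + 1) = phi ^ n + phi ^ (n - 1) := by
      have h : phi ^ (n + 1) = phi ^ (n - 1) * phi ^ 2 := by
        rw [← pow_add]
        congr 1
        omega
      rw [h, phi_sq]
      have : phi ^ (n - 1) * phi = phi ^ n := by
        rw [← pow_succ]
        congr 1
        omega
      nlinarith [this]
    rw [show n + 1 + 2 = (n + 1) + 2 by rfl, Nat.fib_add_two]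
    push_cast
    rw [hp]
    linarith

/-- For all `i ≥ 4`, `⌈log_φ (fib (i+2) - 1)⌉ = i + 1` (with `fib 1 = fib 2 = 1`).
Consequently, for Fibonacci trees of size `n = |F_i| = fib (i+2) - 1 ≥ 7`, the optimal
number of queries `i - 1` equals `⌈log_φ n⌉ - 2`. -/
theorem fibtree_log_ceil (i : ℕ) (hi : 4 ≤ i) :
    ⌈Real.logb phi ((Nat.fib (i + 2) : ℝ) - 1)⌉ = (i : ℤ) + 1 ∧
    (i : ℤ) - 1 = ⌈Real.logb phi ((Nat.fib (i + 2) : ℝ) - 1)⌉ - 2 := by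
  have hb := one_lt_phi
  have hlow : phi ^ i + 1 < (Nat.fib (i + 2) : ℝ) := phi_pow_add_one_lt_fib i hi
  have hpowpos : (0:ℝ) < phi ^ i := pow_pos phi_pos i
  have hx : (0:ℝ) < (Nat.fib (i + 2) : ℝ) - 1 := by linarith
  have hhigh : (Nat.fib (i + 2) : ℝ) - 1 ≤ phi ^ (i + 1) := by
    have := fib_le_phi_pow i
    linarith
  have hmain : ⌈Real.logb phi ((Nat.fib (i + 2) : ℝ) - 1)⌉ = (i : ℤ) + 1 := by
    rw [Int.ceil_eq_iff]
    constructor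
    · push_cast
      rw [show ((i:ℝ) + 1 - 1) = (i:ℝ) by ring,
        Real.lt_logb_iff_rpow_lt hb hx, Real.rpow_natCast]
      linarith
    · push_cast
      rw [Real.logb_le_iff_le_rpow hb hx,
        show ((i:ℝ) + 1) = ((i + 1 : ℕ) : ℝ) by push_cast; ring, Real.rpow_natCast]
      exact hhigh
  exact ⟨hmain, by omega⟩
end
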